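/- arXiv:1709.06612 — 13 statements merged into one kernel-verified Lean document; each statement's English description precedes it below -/
import Mathlib

section
/- If θ₁ and θ₂ are real numbers and S₁ = {θ₁ + 2kπ/m₁ : k ∈ ℤ}, S₂ = {θ₂ + 2kπ/m₂ : k ∈ ℤ} where m₁, m₂ are positive integers with g = gcd(m₁, m₂), then there exist x ∈ S₁ and y ∈ S₂ with |x − y| ≤ πg/(m₁m₂). -/
open Real

theorem stmt_0 (θ₁ θ₂ : ℝ) (m₁ m₂ : ℕ) (hm₁ : 0 < m₁) (hm₂ : 0 < m₂) :
    ∃ x ∈ {x : ℝ | ∃ k : ℤ, x = θ₁ + 2 * k * π / m₁},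
      ∃ y ∈ {y : ℝ | ∃ k : ℤ, y = θ₂ + 2 * k * π / m₂},
        |x - y| ≤ π * (Nat.gcd m₁ m₂) / (m₁ * m₂) := by
  set g : ℕ := Nat.gcd m₁ m₂ with hg
  have hgpos : 0 < g := Nat.gcd_pos_of_pos_left _ hm₁
  have hm₁' : (0:ℝ) < m₁ := by exact_mod_cast hm₁
  have hm₂' : (0:ℝ) < m₂ := by exact_mod_cast hm₂
  have hg' : (0:ℝ) < g := by exact_mod_cast hgpos
  have hc : (0:ℝ) < 2 * π * g / (m₁ * m₂) := by positivity
  set c : ℝ := 2 * π * g / (m₁ * m₂) with hcdef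
  set δ : ℝ := θ₁ - θ₂ with hδ
  set n : ℤ := round (-δ / c) with hn
  have hround : |(-δ / c) - n| ≤ 1 / 2 := (abs_sub_round _)
  have hkey : |δ + n * c| ≤ c / 2 := by
    have heq : (-δ / c - n) * c = -(δ + n * c) := by
      field_simp; ring
    calc |δ + n * c| = |(-δ / c - n) * c| := by
          rw [heq, abs_neg]
      _ = |(-δ / c - n)| * c := by rw [abs_mul, abs_of_pos hc]
      _ ≤ 1 / 2 * c := mul_le_mul_of_nonneg_right hround hc.le
      _ = c / 2 := by ring
  -- Bezout
  obtain ⟨u, v, huv⟩ : ∃ u v : ℤ, u * m₂ + v * m₁ = (g:ℤ) := by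
    refine ⟨Int.gcdA m₂ m₁, Int.gcdB m₂ m₁, ?_⟩
    have := Int.gcd_eq_gcd_ab (m₂ : ℤ) (m₁ : ℤ)
    rw [hg, Nat.gcd_comm]
    push_cast [Int.gcd_natCast_natCast] at this ⊢
    linarith
  refine ⟨θ₁ + 2 * (u * n) * π / m₁, ⟨u * n, by push_cast; ring⟩,
    θ₂ + 2 * (-(v * n)) * π / m₂, ⟨-(v * n), by push_cast; ring⟩, ?_⟩
  have hx : θ₁ + 2 * (u * n) * π / m₁ - (θ₂ + 2 * (-(v * n)) * π / m₂)
      = δ + n * c := by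
    rw [hcdef, hδ]
    have h1 : (m₁:ℝ) ≠ 0 := ne_of_gt hm₁'
    have h2 : (m₂:ℝ) ≠ 0 := ne_of_gt hm₂'
    field_simp
    have : ((u:ℝ) * n * m₂ + v * n * m₁) = n * g := by
      have : ((u * m₂ + v * m₁ : ℤ) : ℝ) = (g:ℝ) := by exact_mod_cast congrArg Int.cast huv
      push_cast at this
      linear_combination (n:ℝ) * this
    linear_combination 2 * π * this
  rw [hx]
  calc |δ + n * c| ≤ c / 2 := hkey
    _ = π * g / (m₁ * m₂) := by rw [hcdef]; ring
end

section
/- The minimum over real θ of cos θ + cos 2θ + cos 3θ equals −(17 + 7√7)/27. -/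
open Real

theorem stmt_6 :
    IsLeast (Set.range fun θ : ℝ => cos θ + cos (2 * θ) + cos (3 * θ))
      (-(17 + 7 * Real.sqrt 7) / 27) := by
  have hs : Real.sqrt 7 ^ 2 = 7 := Real.sq_sqrt (by norm_num)
  have hs2 : (2:ℝ) ≤ Real.sqrt 7 := by
    nlinarith [Real.sqrt_nonneg 7]
  have hs3 : Real.sqrt 7 ≤ 3 := by
    nlinarith [Real.sqrt_nonneg 7]
  constructor
  · refine ⟨Real.arccos ((Real.sqrt 7 - 1) / 6), ?_⟩
    have hc : Real.cos (Real.arccos ((Real.sqrt 7 - 1) / 6)) = (Real.sqrt 7 - 1) / 6 :=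
      Real.cos_arccos (by nlinarith) (by nlinarith)
    simp only
    rw [Real.cos_two_mul, Real.cos_three_mul, hc]
    nlinarith [hs]
  · rintro x ⟨θ, rfl⟩
    simp only
    rw [Real.cos_two_mul, Real.cos_three_mul]
    have h1 : -1 ≤ Real.cos θ := Real.neg_one_le_cos θ
    have h2 : Real.cos θ ≤ 1 := Real.cos_le_one θ
    nlinarith [sq_nonneg (Real.cos θ - (Real.sqrt 7 - 1) / 6), mul_nonneg (sq_nonneg (Real.cos θ - (Real.sqrt 7 - 1) / 6)) (by linarith : (0:ℝ) ≤ Real.cos θ + 1), hs]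
end

section
/- For any positive integers a < b with gcd(a, b) = 1 and b ≥ 3, there exists a real θ such that cos aθ + cos bθ ≤ −2 + π²/18. -/
/-!
Take `θ = m π / b` with `m` odd, so that `cos (b θ) = -1`. Coprimality lets us choose `m` so
that `a m` is congruent modulo `2 b` to some `r` with `|b - r| ≤ 1`; then
`a θ ≡ π - (b - r) π / b (mod 2 π)`, and `cos (a θ) = -cos ((b - r) π / b) ≤ -1 + π² / 18`
because `1 - x² / 2 ≤ cos x` and `|(b - r) π / b| ≤ π / 3`.
-/

open Real

namespace Int

theorem exists_mul_modEq_of_isCoprime {a n : ℤ} (h : IsCoprime a n) (r : ℤ) :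
    ∃ m, a * m ≡ r [ZMOD n] := by
  obtain ⟨u, v, huv⟩ := h
  exact ⟨u * r, (modEq_iff_dvd.mpr ⟨-(v * r), by linear_combination r * huv⟩).symm⟩

theorem odd_of_mul_modEq_two_mul {a m r n : ℤ} (h : a * m ≡ r [ZMOD 2 * n]) (hr : Odd r) :
    Odd m := by
  have hodd : Odd (a * m) := odd_iff.mpr (Eq.trans (h.of_mul_right n) (odd_iff.mp hr))
  exact (odd_mul.mp hodd).2

theorem exists_odd_mul_modEq_two_mul_near {a b : ℤ} (h : IsCoprime a b) :
    ∃ m r : ℤ, Odd m ∧ |b - r| ≤ 1 ∧ a * m ≡ r [ZMOD 2 * b] := by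
  rcases even_or_odd a with ha | ha
  · have hb : Odd b := by
      refine not_even_iff_odd.mp fun hb => ?_
      have := h.isUnit_of_dvd' ha.two_dvd hb.two_dvd
      norm_num [isUnit_iff] at this
    obtain ⟨a', rfl⟩ := ha.two_dvd
    obtain ⟨c, hc⟩ := id hb
    obtain ⟨m, hm⟩ := exists_mul_modEq_of_isCoprime h.of_mul_left_right (c + 1)
    -- adding `b * (m + 1)` keeps the residue modulo `b` and, as `b` is odd, makes it odd
    refine ⟨m + b * (m + 1), b + 1, by simp [hb, parity_simps], by simp, ?_⟩
    have h1 : a' * (m + b * (m + 1)) ≡ c + 1 [ZMOD b] := by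
      rw [ModEq, show a' * (m + b * (m + 1)) = a' * m + b * (a' * (m + 1)) by ring,
        add_mul_emod_self_left]
      exact hm
    rw [mul_assoc, show b + 1 = 2 * (c + 1) by omega]
    exact h1.mul_left'
  · obtain ⟨r, hr, hbr⟩ : ∃ r, Odd r ∧ |b - r| ≤ 1 := by
      rcases even_or_odd b with hb | hb
      · exact ⟨b + 1, hb.add_one, by simp⟩
      · exact ⟨b, hb, by simp⟩
    obtain ⟨m, hm⟩ :=
      exists_mul_modEq_of_isCoprime ((isCoprime_two_right.mpr ha).mul_right h) r
    exact ⟨m, r, odd_of_mul_modEq_two_mul hm hr, hbr, hm⟩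

end Int

theorem cos_mul_add_cos_mul_le_of_mul_modEq {a b m r : ℤ} (hb : 3 ≤ b) (hm : Odd m)
    (hr : |b - r| ≤ 1) (h : a * m ≡ r [ZMOD 2 * b]) :
    cos (a * (m * π / b)) + cos (b * (m * π / b)) ≤ -2 + π ^ 2 / 18 := by
  obtain ⟨t, ht⟩ := Int.modEq_iff_dvd.mp h.symm
  have hb0 : (0 : ℝ) < b := by exact_mod_cast (by omega : 0 < b)
  have hbθ : cos (b * (m * π / b)) = -1 := by
    rw [mul_div_cancel₀ _ hb0.ne', cos_int_mul_pi, hm.neg_one_zpow]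
  set x : ℝ := (b - r) * π / b
  have haθ : cos (a * (m * π / b)) = -cos x := by
    have : (a : ℝ) * (m * π / b) = ((2 * t + 1 : ℤ) : ℝ) * π - x := by
      have ht' : (a : ℝ) * m = r + 2 * b * t := by exact_mod_cast (by linear_combination ht)
      simp only [x]
      field_simp
      push_cast
      linear_combination ht'
    rw [this, cos_int_mul_pi_sub, (odd_two_mul_add_one t).neg_one_zpow, neg_one_mul]
  have hx : x ^ 2 ≤ (π / 3) ^ 2 := by
    rw [← sq_abs]
    refine pow_le_pow_left₀ (abs_nonneg x) ?_ 2
    rw [abs_div, abs_mul, abs_of_pos pi_pos, abs_of_pos hb0, ← one_mul (π / 3), mul_div_assoc]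
    gcongr
    · exact_mod_cast hr
    · exact_mod_cast hb
  nlinarith [one_sub_sq_div_two_le_cos (x := x)]

theorem stmt_7_general (a b : ℕ) (hgcd : Nat.gcd a b = 1)
    (hb : 3 ≤ b) :
    ∃ θ : ℝ, cos (a * θ) + cos (b * θ) ≤ -2 + π ^ 2 / 18 := by
  obtain ⟨m, r, hm, hr, h⟩ :=
    Int.exists_odd_mul_modEq_two_mul_near (Nat.isCoprime_iff_coprime.mpr hgcd)
  exact ⟨m * π / b, by exact_mod_cast cos_mul_add_cos_mul_le_of_mul_modEq (by omega) hm hr h⟩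

theorem stmt_7 (a b : ℕ) (ha : 0 < a) (hab : a < b) (hgcd : Nat.gcd a b = 1)
    (hb : 3 ≤ b) :
    ∃ θ : ℝ, cos (a * θ) + cos (b * θ) ≤ -2 + π ^ 2 / 18 :=
  stmt_7_general a b hgcd hb
end

section
/- For any coprime positive integers a < b, there exists a real θ such that cos aθ + cos bθ ≤ −9/8. -/
/-!
If `a` and `b` are both odd, `θ = π` gives `-2`. Otherwise `a + b` is odd, and coprimality lets us
pick odd `m` with `b θ ≡ π` and `a θ ≡ π - π / b (mod 2π)` for `θ = m π / b`, giving
`-1 - cos (π / b) ≤ -3/2` once `b ≥ 3`. The one remaining pair `(1, 2)` is extremal: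
`cos θ + cos 2θ = 2c² + c - 1` with `c = cos θ` attains `-9/8` at `c = -1/4`.
-/

open Real

lemma Nat.Coprime.odd_and_odd_of_even_add {a b : ℕ} (hco : a.Coprime b) (heven : Even (a + b)) :
    Odd a ∧ Odd b := by
  rcases Nat.even_or_odd a with ha | ha
  · have h2 : 2 ∣ Nat.gcd a b := Nat.dvd_gcd ha.two_dvd ((Nat.even_add.mp heven).mp ha).two_dvd
    rw [hco] at h2
    omega
  · exact ⟨ha, (Nat.even_add'.mp heven).mp ha⟩

lemma exists_odd_odd_mul_eq_mul_sub_one {u v : ℕ} (hco : u.Coprime v) (hpar : Odd (u + v)) :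
    ∃ m n : ℤ, Odd m ∧ Odd n ∧ (u : ℤ) * m = v * n - 1 := by
  obtain ⟨r, hr⟩ := hpar
  have hbezout : (1 : ℤ) = u * u.gcdA v + v * u.gcdB v := by
    exact_mod_cast hco ▸ Nat.gcd_eq_gcd_ab u v
  -- `d = r - u = (v - 1 - u) / 2` and Bezout `u A + v B = 1` give `u (2Ad + 1) = v (1 - 2Bd) - 1`
  refine ⟨2 * (u.gcdA v * (r - u)) + 1, 2 * (-(u.gcdB v * (r - u))) + 1, odd_two_mul_add_one _,
    odd_two_mul_add_one _, ?_⟩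
  have hr' : (u : ℤ) + v = 2 * r + 1 := by exact_mod_cast hr
  linear_combination (2 * ((r : ℤ) - u)) * hbezout.symm - hr'

lemma exists_cos_mul_add_cos_mul_eq {u v : ℕ} (hv : 0 < v) (hco : u.Coprime v)
    (hpar : Odd (u + v)) : ∃ θ : ℝ, cos (u * θ) + cos (v * θ) = -1 - cos (π / v) := by
  obtain ⟨m, n, hm, hn, hmn⟩ := exists_odd_odd_mul_eq_mul_sub_one hco hpar
  have hv' : (v : ℝ) ≠ 0 := by positivity
  have hmnR : (u : ℝ) * m = v * n - 1 := by exact_mod_cast hmn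
  refine ⟨m * π / v, ?_⟩
  have hu : (u : ℝ) * (m * π / v) = n * π - π / v := by
    field_simp
    linear_combination hmnR
  have hvθ : (v : ℝ) * (m * π / v) = m * π := by field_simp
  rw [hu, hvθ, cos_int_mul_pi, cos_int_mul_pi_sub, hm.neg_one_zpow, hn.neg_one_zpow]
  ring

lemma exists_cos_add_cos_two_mul_eq : ∃ θ : ℝ, cos θ + cos (2 * θ) = -9 / 8 := by
  refine ⟨arccos (-1 / 4), ?_⟩
  rw [cos_two_mul, cos_arccos (by norm_num) (by norm_num)]
  norm_num

theorem stmt_8 (a b : ℕ) (ha : 0 < a) (hab : a < b) (hgcd : Nat.gcd a b = 1) :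
    ∃ θ : ℝ, cos (a * θ) + cos (b * θ) ≤ -9/8 := by
  rcases Nat.even_or_odd (a + b) with heven | hodd
  · obtain ⟨hao, hbo⟩ := Nat.Coprime.odd_and_odd_of_even_add hgcd heven
    refine ⟨π, ?_⟩
    rw [cos_nat_mul_pi, cos_nat_mul_pi, hao.neg_one_pow, hbo.neg_one_pow]
    norm_num
  obtain rfl | hb := eq_or_ne b 2
  · obtain rfl : a = 1 := by omega
    obtain ⟨θ, hθ⟩ := exists_cos_add_cos_two_mul_eq
    exact ⟨θ, by push_cast; rw [one_mul, hθ]⟩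
  obtain ⟨θ, hθ⟩ := exists_cos_mul_add_cos_mul_eq (by omega) hgcd hodd
  have hcos : 1 / 2 ≤ cos (π / b) := by
    rw [← cos_pi_div_three]
    have h3b : (3 : ℝ) ≤ b := by exact_mod_cast (show 3 ≤ b by omega)
    exact cos_le_cos_of_nonneg_of_le_pi (by positivity) (by linarith [pi_pos])
      (div_le_div_of_nonneg_left pi_pos.le (by norm_num) h3b)
  exact ⟨θ, by linarith⟩
end

section
/- For any positive integers a < b < c with gcd(a, b, c) = 1, there exists a real θ such that cos aθ + cos bθ + cos cθ ≤ −(17 + 7√7)/27. -/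
/-!
If `c ≠ a + b`, look at the `c` angles `θₖ = (2k + 1)π / c`, where `cos cθₖ = -1`, and sum over them
the quantity `(2 - 2 cos aθ)(2 - 2 cos bθ)(cos aθ + cos bθ + 1/2)`. Expanded into cosines, only the
frequencies divisible by `c` survive the summation, and a finite case check shows that the sum is
`≤ 0`. The first two factors are nonnegative and positive at `θ₀ = π / c`, so some `θₖ` has
`cos aθₖ + cos bθₖ ≤ -1/2`, and the whole sum is at most `-3/2` there.

If `c = a + b`, then `a` and `b` are coprime, so `θ` can be chosen with `bθ ≡ 2π/3` and
`aθ ≡ 2π/3 + δ` modulo `2π`, where `|δ| ≤ 2π / 3b`. Then `cθ ≡ 4π/3 + δ` and the sum equals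
`-1/2 - cos δ ≤ -(1 + √3)/2` as soon as `b ≥ 4`. The triples `(1, 2, 3)`, `(1, 3, 4)` and
`(2, 3, 5)` are checked by hand; the first one, at `cos θ = (√7 - 1)/6`, is extremal.
-/

open Real Finset

noncomputable def lambda3 : ℝ := (17 + 7 * √7) / 27

lemma lambda3_le : lambda3 ≤ (1 + √3) / 2 := by
  have h7 : √7 < 2.65 := by rw [sqrt_lt' (by norm_num)]; norm_num
  have h3 : 1.7 < √3 := by rw [lt_sqrt (by norm_num)]; norm_num
  rw [lambda3]
  linarith

section

variable {c : ℕ}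

-- `rootArg c k` are the arguments of the `c`-th roots of `-1`.
noncomputable def rootArg (c k : ℕ) : ℝ := (2 * k + 1) * π / c

noncomputable def rootCosSum (c : ℕ) (m : ℤ) : ℝ := ∑ k ∈ range c, cos (m * rootArg c k)

lemma two_mul_sin_mul_rootCosSum (m : ℤ) : 2 * sin (m * π / c) * rootCosSum c m = 0 := by
  rcases eq_or_ne c 0 with rfl | hc
  · simp [rootCosSum]
  set φ := m * π / c
  have hterm (k : ℕ) :
      2 * sin φ * cos (m * rootArg c k) = sin (2 * (k + 1 : ℕ) * φ) - sin (2 * k * φ) := by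
    have hmk : (m : ℝ) * rootArg c k = (2 * k + 1) * φ := by simp only [φ, rootArg]; ring
    rw [two_mul_sin_mul_cos, hmk, show φ - (2 * k + 1) * φ = -(2 * k * φ) by ring, sin_neg]
    push_cast
    ring_nf
  have hφ : 2 * (c : ℝ) * φ = (2 * m : ℤ) * π := by simp only [φ]; push_cast; field_simp
  rw [rootCosSum, mul_sum]
  simp_rw [hterm]
  rw [sum_range_sub (fun k : ℕ => sin (2 * k * φ)), hφ, sin_int_mul_pi]
  simp

lemma rootCosSum_of_not_dvd {m : ℤ} (hm : ¬ (c : ℤ) ∣ m) : rootCosSum c m = 0 := by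
  rcases eq_or_ne c 0 with rfl | hc
  · simp [rootCosSum]
  have hsin : sin (m * π / c) ≠ 0 := by
    rintro hsin
    obtain ⟨n, hn⟩ := sin_eq_zero_iff.1 hsin
    refine hm ⟨n, ?_⟩
    have : (m : ℝ) = c * n := by
      field_simp at hn
      linarith
    exact_mod_cast this
  exact (mul_eq_zero.1 (two_mul_sin_mul_rootCosSum (c := c) m)).resolve_left
    (mul_ne_zero two_ne_zero hsin)

lemma rootCosSum_mul_self (hc : c ≠ 0) (d : ℤ) : rootCosSum c (c * d) = (-1) ^ d * c := by
  have hterm (k : ℕ) : cos (((c * d : ℤ) : ℝ) * rootArg c k) = (-1) ^ d := by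
    have : ((c * d : ℤ) : ℝ) * rootArg c k = d * π + (d * k : ℤ) * (2 * π) := by
      rw [rootArg]; push_cast; field_simp; ring
    rw [this, cos_add_int_mul_two_pi, cos_int_mul_pi]
  simp_rw [rootCosSum, hterm]
  simp [mul_comm]

lemma rootCosSum_eq_ite (hc : c ≠ 0) {m : ℤ} (h₁ : -c < m) (h₂ : m < 3 * c) :
    rootCosSum c m = if m = c then -(c : ℝ) else if m = 0 ∨ m = 2 * c then (c : ℝ) else 0 := by
  by_cases hdvd : (c : ℤ) ∣ m
  · obtain ⟨d, rfl⟩ := hdvd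
    have hc' : (0 : ℤ) < c := by omega
    have hd : d = 0 ∨ d = 1 ∨ d = 2 := by
      have : -1 < d := by nlinarith
      have : d < 3 := by nlinarith
      omega
    rcases hd with rfl | rfl | rfl <;> rw [rootCosSum_mul_self hc] <;>
      simp [hc, mul_comm, eq_comm (a := (0 : ℤ))]
  · rw [rootCosSum_of_not_dvd hdvd, if_neg (by rintro rfl; simp at hdvd),
      if_neg (by rintro (rfl | rfl) <;> simp at hdvd)]

lemma cos_natCast_mul_rootArg_self (hc : c ≠ 0) (k : ℕ) : cos (c * rootArg c k) = -1 := by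
  rw [rootArg, mul_div_cancel₀ _ (Nat.cast_ne_zero.2 hc), ← cos_nat_mul_two_pi_add_pi k]
  ring_nf

lemma cos_natCast_mul_rootArg_zero_lt_one {a : ℕ} (ha : 0 < a) (hac : a ≤ c) :
    cos (a * rootArg c 0) < 1 := by
  have hc : (0 : ℝ) < c := by norm_cast; omega
  have hac' : (a : ℝ) ≤ c := by exact_mod_cast hac
  have h0 : rootArg c 0 = π / c := by simp [rootArg]
  rw [← cos_zero, h0]
  refine cos_lt_cos_of_nonneg_of_le_pi le_rfl ?_ (by positivity)
  rw [mul_div_assoc', div_le_iff₀ hc]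
  nlinarith [pi_pos]

noncomputable def weightedExcess (a b : ℤ) (x : ℝ) : ℝ :=
  (2 - 2 * cos (a * x)) * (2 - 2 * cos (b * x)) * (cos (a * x) + cos (b * x) + 1 / 2)

lemma weightedExcess_eq (a b : ℤ) (x : ℝ) :
    weightedExcess a b x =
      -2 + 4 * cos (a * x) + 4 * cos (b * x) - 2 * cos ((2 * a : ℤ) * x) - 2 * cos ((2 * b : ℤ) * x)
        - 3 * cos ((a + b : ℤ) * x) - 3 * cos ((b - a : ℤ) * x) + cos ((2 * a + b : ℤ) * x)
        + cos ((2 * a - b : ℤ) * x) + cos ((a + 2 * b : ℤ) * x) + cos ((2 * b - a : ℤ) * x) := by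
  push_cast
  simp only [weightedExcess, add_mul, sub_mul, mul_assoc, cos_add, cos_sub, cos_two_mul,
    sin_two_mul]
  ring

lemma sum_weightedExcess_rootArg (a b : ℤ) :
    ∑ k ∈ range c, weightedExcess a b (rootArg c k) =
      -2 * c + 4 * rootCosSum c a + 4 * rootCosSum c b - 2 * rootCosSum c (2 * a)
        - 2 * rootCosSum c (2 * b) - 3 * rootCosSum c (a + b) - 3 * rootCosSum c (b - a)
        + rootCosSum c (2 * a + b) + rootCosSum c (2 * a - b) + rootCosSum c (a + 2 * b)
        + rootCosSum c (2 * b - a) := by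
  simp only [weightedExcess_eq, rootCosSum, sum_add_distrib, sum_sub_distrib, ← mul_sum, sum_const,
    card_range, nsmul_eq_mul]
  ring

lemma sum_weightedExcess_rootArg_nonpos {a b : ℕ} (ha : 0 < a) (hab : a < b) (hbc : b < c)
    (hne : c ≠ a + b) : ∑ k ∈ range c, weightedExcess a b (rootArg c k) ≤ 0 := by
  have hc : c ≠ 0 := by omega
  rw [sum_weightedExcess_rootArg]
  -- All eleven frequencies lie in `(-c, 3c)`; the cases are which of them equal `0`, `c` or `2c`.
  simp (disch := omega) only [rootCosSum_eq_ite hc, if_neg]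
  split_ifs <;> first | omega | linarith

lemma weightedExcess_nonneg {a b : ℤ} {x : ℝ} (h : -1 / 2 ≤ cos (a * x) + cos (b * x)) :
    0 ≤ weightedExcess a b x := by
  have ha1 := cos_le_one (a * x)
  have hb1 := cos_le_one (b * x)
  unfold weightedExcess
  exact mul_nonneg (mul_nonneg (by linarith) (by linarith)) (by linarith)

lemma exists_cos_add_cos_rootArg_le {a b : ℕ} (ha : 0 < a) (hab : a < b) (hbc : b < c)
    (hne : c ≠ a + b) : ∃ k, cos (a * rootArg c k) + cos (b * rootArg c k) ≤ -1 / 2 := by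
  by_contra! h
  refine (sum_weightedExcess_rootArg_nonpos ha hab hbc hne).not_gt
    (sum_pos' (fun k _ => weightedExcess_nonneg ?_) ⟨0, mem_range.2 (by omega), ?_⟩)
  · simpa using (h k).le
  · have ha1 := cos_natCast_mul_rootArg_zero_lt_one ha (by omega : a ≤ c)
    have hb1 := cos_natCast_mul_rootArg_zero_lt_one (by omega) (by omega : b ≤ c)
    have h0 := h 0
    unfold weightedExcess
    push_cast
    exact mul_pos (mul_pos (by linarith) (by linarith)) (by linarith)

lemma exists_cos_sum_le_of_ne_add {a b : ℕ} (ha : 0 < a) (hab : a < b) (hbc : b < c)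
    (hne : c ≠ a + b) : ∃ θ : ℝ, cos (a * θ) + cos (b * θ) + cos (c * θ) ≤ -lambda3 := by
  obtain ⟨k, hk⟩ := exists_cos_add_cos_rootArg_le ha hab hbc hne
  refine ⟨rootArg c k, ?_⟩
  rw [cos_natCast_mul_rootArg_self (by omega)]
  nlinarith [lambda3_le, sq_sqrt (show (0 : ℝ) ≤ 3 by norm_num), sqrt_nonneg 3]

end

lemma cos_add_two_pi_div_three_add_cos_add_four_pi_div_three (x : ℝ) :
    cos (x + 2 * π / 3) + cos (x + 4 * π / 3) = -cos x := by
  rw [cos_add_cos, show (x + 2 * π / 3 + (x + 4 * π / 3)) / 2 = x + π by ring,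
    show (x + 2 * π / 3 - (x + 4 * π / 3)) / 2 = -(π / 3) by ring, cos_add_pi, cos_neg,
    cos_pi_div_three]
  ring

lemma IsCoprime.exists_mul_three_mul_add_one_eq {a b : ℤ} (h : IsCoprime a b) :
    ∃ n t e : ℤ, |e| ≤ 1 ∧ a * (3 * n + 1) = b + e + 3 * b * t := by
  obtain ⟨u, v, huv⟩ := h
  -- `s` is `(b - a) / 3` rounded to the nearest integer.
  set s := (b - a + 1) / 3
  refine ⟨s * u, -(s * v), 3 * s - (b - a), abs_le.2 ⟨by omega, by omega⟩, ?_⟩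
  linear_combination 3 * s * huv

lemma exists_cos_sum_eq_of_isCoprime {a b : ℤ} (hb : b ≠ 0) (h : IsCoprime a b) :
    ∃ θ : ℝ, ∃ e : ℤ, |e| ≤ 1 ∧
      cos (a * θ) + cos (b * θ) + cos ((a + b) * θ) = -1 / 2 - cos (2 * π * e / (3 * b)) := by
  obtain ⟨n, t, e, he, hnte⟩ := h.exists_mul_three_mul_add_one_eq
  have hnte' : (a : ℝ) * (3 * n + 1) = b + e + 3 * b * t := by exact_mod_cast hnte
  have hb' : (b : ℝ) ≠ 0 := by exact_mod_cast hb
  set θ : ℝ := 2 * π * (3 * n + 1) / (3 * b)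
  set δ : ℝ := 2 * π * e / (3 * b)
  have hbθ : b * θ = 2 * π / 3 + n * (2 * π) := by simp only [θ]; field_simp; ring
  have haθ : a * θ = δ + 2 * π / 3 + t * (2 * π) := by
    calc a * θ = 2 * π * (a * (3 * n + 1)) / (3 * b) := by ring
      _ = _ := by rw [hnte']; simp only [δ]; field_simp; ring
  have habθ : (a + b) * θ = δ + 4 * π / 3 + ((n + t : ℤ) : ℝ) * (2 * π) := by
    push_cast; linear_combination haθ + hbθ
  have hcos : cos (2 * π / 3) = -1 / 2 := by
    rw [show 2 * π / 3 = π - π / 3 by ring, cos_pi_sub, cos_pi_div_three]; norm_num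
  refine ⟨θ, e, he, ?_⟩
  rw [hbθ, haθ, habθ, cos_add_int_mul_two_pi, cos_add_int_mul_two_pi, cos_add_int_mul_two_pi,
    hcos]
  linear_combination cos_add_two_pi_div_three_add_cos_add_four_pi_div_three δ

lemma sqrt_three_div_two_le_cos {e b : ℝ} (he : |e| ≤ 1) (hb : 4 ≤ b) :
    √3 / 2 ≤ cos (2 * π * e / (3 * b)) := by
  rw [← cos_pi_div_six, ← cos_abs (2 * π * e / (3 * b))]
  refine cos_le_cos_of_nonneg_of_le_pi (abs_nonneg _) (by linarith [pi_pos]) ?_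
  rw [abs_div, abs_mul, abs_of_pos two_pi_pos, abs_of_pos (by linarith : (0 : ℝ) < 3 * b),
    div_le_div_iff₀ (by linarith) (by norm_num)]
  nlinarith [pi_pos, abs_nonneg e]

lemma exists_cos_sum_le_of_coprime {a b : ℕ} (hb : 4 ≤ b) (hab : Nat.Coprime a b) :
    ∃ θ : ℝ, cos (a * θ) + cos (b * θ) + cos ((a + b : ℕ) * θ) ≤ -lambda3 := by
  obtain ⟨θ, e, he, hθ⟩ :=
    exists_cos_sum_eq_of_isCoprime (by omega) (Nat.isCoprime_iff_coprime.2 hab)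
  have hcos := sqrt_three_div_two_le_cos (e := e) (b := b) (by exact_mod_cast he)
    (by exact_mod_cast hb)
  refine ⟨θ, ?_⟩
  push_cast at hθ ⊢
  linarith [lambda3_le]

lemma exists_cos_sum_le_one_two_three :
    ∃ θ : ℝ, cos θ + cos (2 * θ) + cos (3 * θ) ≤ -lambda3 := by
  have h7 : √7 ^ 2 = 7 := sq_sqrt (by norm_num)
  have h7' : √7 < 2.65 := by rw [sqrt_lt' (by norm_num)]; norm_num
  have h7'' : 0 ≤ √7 := sqrt_nonneg 7
  refine ⟨arccos ((√7 - 1) / 6), le_of_eq ?_⟩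
  rw [cos_two_mul, cos_three_mul, cos_arccos (by linarith) (by linarith), lambda3]
  linear_combination (√7 / 54) * h7

lemma exists_cos_sum_le_one_three_four :
    ∃ θ : ℝ, cos θ + cos (3 * θ) + cos (4 * θ) ≤ -lambda3 := by
  refine ⟨5 * π / 6, ?_⟩
  rw [show 5 * π / 6 = π - π / 6 by ring, cos_pi_sub, cos_pi_div_six,
    show 3 * (π - π / 6) = π / 2 + (1 : ℕ) * (2 * π) by push_cast; ring,
    cos_add_nat_mul_two_pi, cos_pi_div_two,
    show 4 * (π - π / 6) = π / 3 + π + (1 : ℕ) * (2 * π) by push_cast; ring,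
    cos_add_nat_mul_two_pi, cos_add_pi, cos_pi_div_three]
  linarith [lambda3_le]

lemma exists_cos_sum_le_two_three_five :
    ∃ θ : ℝ, cos (2 * θ) + cos (3 * θ) + cos (5 * θ) ≤ -lambda3 := by
  refine ⟨π / 4, ?_⟩
  rw [show 2 * (π / 4) = π / 2 by ring, cos_pi_div_two,
    show 3 * (π / 4) = π - π / 4 by ring, cos_pi_sub, cos_pi_div_four,
    show 5 * (π / 4) = π / 4 + π by ring, cos_add_pi, cos_pi_div_four]
  have h3 : √3 < 1.8 := by rw [sqrt_lt' (by norm_num)]; norm_num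
  have h2 : 1.4 < √2 := by rw [lt_sqrt (by norm_num)]; norm_num
  linarith [lambda3_le]

theorem stmt_9 (a b c : ℕ) (ha : 0 < a) (hab : a < b) (hbc : b < c)
    (hgcd : Nat.gcd (Nat.gcd a b) c = 1) :
    ∃ θ : ℝ, cos (a * θ) + cos (b * θ) + cos (c * θ)
      ≤ -(17 + 7 * Real.sqrt 7) / 27 := by
  rw [neg_div]
  rcases ne_or_eq c (a + b) with hne | rfl
  · exact exists_cos_sum_le_of_ne_add ha hab hbc hne
  have hcop : Nat.Coprime a b := by
    rwa [Nat.gcd_eq_left (Nat.dvd_add (Nat.gcd_dvd_left a b) (Nat.gcd_dvd_right a b))] at hgcd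
  rcases le_or_gt 4 b with hb | hb
  · exact exists_cos_sum_le_of_coprime hb hcop
  interval_cases b <;> interval_cases a <;> norm_num
  · exact exists_cos_sum_le_one_two_three
  · exact exists_cos_sum_le_one_three_four
  · exact exists_cos_sum_le_two_three_five
end

section
/- Let a < b < c be positive integers with gcd(a,b,c) = 1 and c ∉ {2a, 2b, a + b}. Then there exists a real θ with cos cθ = −1 and cos aθ + cos bθ ≤ −1/2; in particular cos aθ + cos bθ + cos cθ ≤ −3/2. -/
/-!
Sample at the `c` angles `θⱼ = (2j + 1)π / c` (`oddAngle c j`), where `cos (cθⱼ) = -1`, and let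
`fⱼ = cos (aθⱼ) + cos (bθⱼ) ≤ 2`. The excluded values of `c` make every frequency occurring in
`f` and `f²` (namely `a`, `b`, `2a`, `2b`, `a + b`, `b - a`) non-divisible by `c`, so these
cosines average to zero over the `θⱼ`: `f` has mean `0` and mean square `1`. Then
`∑ⱼ (2 - fⱼ)(fⱼ + 1/2) = c - ∑ⱼ fⱼ² = 0`, which is impossible if every `fⱼ > -1/2`,
since not every `fⱼ` equals `2`.
-/

open Real Finset

noncomputable def oddAngle (c j : ℕ) : ℝ := (2 * j + 1) * π / c

lemma cos_natCast_mul_oddAngle {c : ℕ} (hc : c ≠ 0) (j : ℕ) : cos (c * oddAngle c j) = -1 := by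
  have : (c : ℝ) * oddAngle c j = j * (2 * π) + π := by
    unfold oddAngle
    field_simp
  rw [this, cos_add_pi, cos_nat_mul_two_pi]

lemma sum_cos_natCast_mul_oddAngle {c m : ℕ} (hm : ¬ c ∣ m) :
    ∑ j ∈ range c, cos (m * oddAngle c j) = 0 := by
  rcases Nat.eq_zero_or_pos c with rfl | hc
  · simp
  set ζ : ℂ := Complex.exp (2 * π * Complex.I / c)
  have hζ : IsPrimitiveRoot ζ c := Complex.isPrimitiveRoot_exp c hc.ne'
  have hz : ζ ^ m ≠ 1 := fun h => hm (hζ.pow_eq_one_iff_dvd m |>.1 h)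
  have hzc : (ζ ^ m) ^ c = 1 := by rw [← pow_mul, mul_comm, pow_mul, hζ.pow_eq_one, one_pow]
  have hgeom : ∑ j ∈ range c, (ζ ^ m) ^ j = 0 := by
    rw [geom_sum_eq hz, hzc, sub_self, zero_div]
  set w : ℂ := Complex.exp ((m * π / c : ℝ) * Complex.I)
  have hterm (j : ℕ) : cos (m * oddAngle c j) = (w * (ζ ^ m) ^ j).re := by
    rw [← pow_mul, ← Complex.exp_nat_mul, ← Complex.exp_add, ← Complex.exp_ofReal_mul_I_re]
    congr 2
    unfold oddAngle
    push_cast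
    field_simp
    ring
  simp only [hterm, ← Complex.re_sum, ← mul_sum, hgeom, mul_zero, Complex.zero_re]

lemma cos_add_cos_sq (x y : ℝ) :
    (cos x + cos y) ^ 2 = 1 + cos (2 * x) / 2 + cos (2 * y) / 2 + cos (x + y) + cos (y - x) := by
  rw [cos_two_mul, cos_two_mul, cos_add, cos_sub]
  ring

lemma Nat.not_dvd_of_lt_two_mul {c m : ℕ} (h0 : 0 < m) (h2 : m < 2 * c) (hne : m ≠ c) :
    ¬ c ∣ m := by
  rintro ⟨k, rfl⟩
  rcases k with _ | _ | k
  · omega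
  · simp at hne
  · nlinarith

lemma exists_le_neg_of_sum_eq_zero_of_le_sum_sq {ι : Type*} {s : Finset ι} {f : ι → ℝ}
    {M t : ℝ} (hM : 0 < M) (hs : s.Nonempty) (hf : ∀ i ∈ s, f i ≤ M) (hsum : ∑ i ∈ s, f i = 0)
    (hsq : M * t * #s ≤ ∑ i ∈ s, f i ^ 2) : ∃ i ∈ s, f i ≤ -t := by
  by_contra! hgt
  have hlt : ∃ i ∈ s, f i < M := by
    by_contra! hge
    have := card_nsmul_le_sum s f M hge
    rw [hsum, nsmul_eq_mul] at this
    linarith [mul_pos (Nat.cast_pos.2 hs.card_pos) hM]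
  have hpos : 0 < ∑ i ∈ s, (M - f i) * (f i + t) := by
    refine sum_pos' (fun i hi => mul_nonneg ?_ ?_) ?_
    · linarith [hf i hi]
    · linarith [hgt i hi]
    · obtain ⟨i, hi, hfi⟩ := hlt
      exact ⟨i, hi, mul_pos (by linarith) (by linarith [hgt i hi])⟩
  have hexpand : ∑ i ∈ s, (M - f i) * (f i + t)
      = (M - t) * ∑ i ∈ s, f i + M * t * #s - ∑ i ∈ s, f i ^ 2 := by
    rw [sum_congr rfl fun i _ => show (M - f i) * (f i + t) = (M - t) * f i + M * t - f i ^ 2 by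
      ring]
    simp only [sum_sub_distrib, sum_add_distrib, ← mul_sum, sum_const, nsmul_eq_mul]
    ring
  rw [hexpand, hsum] at hpos
  linarith

section

variable {a b c : ℕ}

lemma sum_cos_add_cos_oddAngle (ha : ¬ c ∣ a) (hb : ¬ c ∣ b) :
    ∑ j ∈ range c, (cos (a * oddAngle c j) + cos (b * oddAngle c j)) = 0 := by
  rw [sum_add_distrib, sum_cos_natCast_mul_oddAngle ha, sum_cos_natCast_mul_oddAngle hb, add_zero]

lemma sum_sq_cos_add_cos_oddAngle (hab : a ≤ b) (h2a : ¬ c ∣ 2 * a) (h2b : ¬ c ∣ 2 * b)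
    (hadd : ¬ c ∣ a + b) (hsub : ¬ c ∣ b - a) :
    ∑ j ∈ range c, (cos (a * oddAngle c j) + cos (b * oddAngle c j)) ^ 2 = c := by
  have hsq (j : ℕ) : (cos (a * oddAngle c j) + cos (b * oddAngle c j)) ^ 2 =
      1 + cos ((2 * a : ℕ) * oddAngle c j) / 2 + cos ((2 * b : ℕ) * oddAngle c j) / 2
        + cos ((a + b : ℕ) * oddAngle c j) + cos ((b - a : ℕ) * oddAngle c j) := by
    rw [cos_add_cos_sq, Nat.cast_sub hab]
    push_cast
    ring_nf
  simp only [hsq, sum_add_distrib, ← sum_div, sum_cos_natCast_mul_oddAngle, h2a, h2b, hadd,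
    hsub, not_false_eq_true]
  simp

end

theorem stmt_10_general (a b c : ℕ) (ha : 0 < a) (hab : a < b) (hbc : b < c)
    (h1 : c ≠ 2 * a) (h2 : c ≠ 2 * b) (h3 : c ≠ a + b) :
    ∃ θ : ℝ, cos (c * θ) = -1 ∧ cos (a * θ) + cos (b * θ) ≤ -1/2 ∧
      cos (a * θ) + cos (b * θ) + cos (c * θ) ≤ -3/2 := by
  have hc : c ≠ 0 := by omega
  set f : ℕ → ℝ := fun j => cos (a * oddAngle c j) + cos (b * oddAngle c j)
  have hf_le (j : ℕ) : f j ≤ 2 := by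
    linarith [cos_le_one (a * oddAngle c j), cos_le_one (b * oddAngle c j)]
  have hsum : ∑ j ∈ range c, f j = 0 :=
    sum_cos_add_cos_oddAngle (Nat.not_dvd_of_pos_of_lt ha (by omega))
      (Nat.not_dvd_of_pos_of_lt (by omega) hbc)
  have hsq : ∑ j ∈ range c, f j ^ 2 = c :=
    sum_sq_cos_add_cos_oddAngle hab.le
      (Nat.not_dvd_of_lt_two_mul (by omega) (by omega) h1.symm)
      (Nat.not_dvd_of_lt_two_mul (by omega) (by omega) h2.symm)
      (Nat.not_dvd_of_lt_two_mul (by omega) (by omega) h3.symm)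
      (Nat.not_dvd_of_pos_of_lt (by omega) (by omega))
  obtain ⟨j, -, hj⟩ := exists_le_neg_of_sum_eq_zero_of_le_sum_sq (t := 1 / 2) two_pos
    (nonempty_range_iff.2 hc) (fun j _ => hf_le j) hsum (by rw [hsq]; norm_num)
  have hcj := cos_natCast_mul_oddAngle hc j
  exact ⟨oddAngle c j, hcj, by linarith, by linarith⟩

theorem stmt_10 (a b c : ℕ) (ha : 0 < a) (hab : a < b) (hbc : b < c)
    (hgcd : Nat.gcd (Nat.gcd a b) c = 1)
    (h1 : c ≠ 2 * a) (h2 : c ≠ 2 * b) (h3 : c ≠ a + b) :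
    ∃ θ : ℝ, cos (c * θ) = -1 ∧ cos (a * θ) + cos (b * θ) ≤ -1/2 ∧
      cos (a * θ) + cos (b * θ) + cos (c * θ) ≤ -3/2 :=
  stmt_10_general a b c ha hab hbc h1 h2 h3
end

section
/- Let a < b be coprime positive integers with a ≥ 3 and let c = 2a, where b is not a multiple of a. Then there exists a real θ such that cos aθ + cos bθ + cos cθ ≤ −2 + π²/18. -/
open Real

set_option maxHeartbeats 1600000 in
theorem stmt_11 (a b c : ℕ) (ha : 3 ≤ a) (hab : a < b) (hgcd : Nat.gcd a b = 1)
    (hnd : ¬ a ∣ b) (hc : c = 2 * a) :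
    ∃ θ : ℝ, cos (a * θ) + cos (b * θ) + cos (c * θ) ≤ -2 + π ^ 2 / 18 := by
  have hA0 : (0:ℝ) < (a:ℝ) := by
    have : 0 < a := by omega
    exact_mod_cast this
  have hA3 : (3:ℝ) ≤ (a:ℝ) := by exact_mod_cast ha
  -- Bezout
  have hbez : (a:ℤ) * Nat.gcdA a b + (b:ℤ) * Nat.gcdB a b = 1 := by
    have := Nat.gcd_eq_gcd_ab a b
    rw [hgcd] at this
    push_cast at this ⊢
    linarith
  obtain ⟨t, ht1, ht2⟩ : ∃ t : ℤ, ((a:ℝ) - (b:ℝ))/3 ≤ (t:ℝ) ∧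
      (t:ℝ) < ((a:ℝ) - (b:ℝ))/3 + 1 :=
    ⟨⌈((a:ℝ) - (b:ℝ))/3⌉, Int.le_ceil _, Int.ceil_lt_add_one _⟩
  obtain ⟨T, k, hBT⟩ : ∃ T k : ℤ, (b:ℤ) * T = t - (a:ℤ) * k :=
    ⟨Nat.gcdB a b * t, Nat.gcdA a b * t, by linear_combination t * hbez⟩
  have hBTR : (b:ℝ) * (T:ℝ) = (t:ℝ) - (a:ℝ) * (k:ℝ) := by exact_mod_cast hBT
  set θ : ℝ := 2*π*(3*(T:ℝ)+1)/(3*(a:ℝ)) with hθ_def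
  set x : ℝ := (6*(t:ℝ)+2*(b:ℝ))/(3*(a:ℝ)) with hx_def
  have hbR : (a:ℝ) < (b:ℝ) := by exact_mod_cast hab
  -- bounds on x
  have hx1 : (2:ℝ)/3 ≤ x := by
    rw [hx_def, div_le_div_iff₀ (by norm_num) (by positivity)]
    nlinarith
  have hx2 : x ≤ (4:ℝ)/3 := by
    rw [hx_def, div_le_div_iff₀ (by positivity) (by norm_num)]
    nlinarith
  refine ⟨θ, ?_⟩
  have hane : (a:ℝ) ≠ 0 := ne_of_gt hA0
  -- a*θ
  have haθ : (a:ℝ) * θ = 2*π/3 + (T:ℝ) * (2*π) := by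
    rw [hθ_def]; field_simp; ring
  have hcosa : cos ((a:ℝ) * θ) = -(1/2) := by
    rw [haθ, Real.cos_add_int_mul_two_pi]
    rw [show (2*π/3 : ℝ) = π - π/3 by ring, Real.cos_pi_sub, Real.cos_pi_div_three]
  -- c*θ
  have hcθ : (c:ℝ) * θ = π/3 + π + ((2*T : ℤ):ℝ) * (2*π) := by
    rw [hθ_def, hc]; push_cast; field_simp; ring
  have hcosc : cos ((c:ℝ) * θ) = -(1/2) := by
    rw [hcθ, Real.cos_add_int_mul_two_pi, Real.cos_add_pi, Real.cos_pi_div_three]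
  -- b*θ
  have hbθ : (b:ℝ) * θ = π * x + ((-k : ℤ):ℝ) * (2*π) := by
    rw [hθ_def, hx_def]
    push_cast
    field_simp
    nlinarith [hBTR, Real.pi_pos]
  clear_value θ x
  have hcosb : cos ((b:ℝ) * θ) ≤ -(1/2) := by
    rw [hbθ, Real.cos_add_int_mul_two_pi]
    have h1 : cos (π*x) = -cos (π*x - π) := by rw [Real.cos_sub_pi]; ring
    have h3 : |π*x - π| ≤ π/3 := by
      rw [abs_le]
      constructor <;> nlinarith [Real.pi_pos]
    have h4 : cos (π/3) ≤ cos |π*x - π| := by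
      apply Real.cos_le_cos_of_nonneg_of_le_pi (abs_nonneg _) _ h3
      linarith [Real.pi_pos]
    rw [Real.cos_abs, Real.cos_pi_div_three] at h4
    linarith [h1, h4]
  rw [hcosa, hcosc]
  have hpi3 : (3:ℝ) < π := Real.pi_gt_three
  nlinarith [hcosb, hpi3]
end

section
/- Let a < b be coprime positive integers with b ≥ 33 and let c = a + b. Then there exists a real θ such that cos aθ + cos bθ + cos cθ ≤ −3/2 + 6/b. -/
open Real

/-! Take `θ = 2πs/(3b)` with `s ≡ 1 (mod 3)`, so that `bθ ≡ 2π/3 (mod 2π)`. Since `a` is invertible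
mod `b`, the products `a s` run through every residue mod `3b` that is `≡ a (mod 3)`, and one of
`b - 1, b, b + 1` is such a residue; for that choice `aθ` lies within `2π/(3b)` of `2π/3` and
`cθ = aθ + bθ` within the same distance of `4π/3`. As `cos` is 1-Lipschitz and takes the value
`-1/2` at all three target angles, the sum is at most `-3/2 + 4π/(3b) ≤ -3/2 + 6/b`. -/

theorem IsCoprime.exists_abs_mul_sub_mul_le_one {a b : ℤ} (h : IsCoprime a b) :
    ∃ j m : ℤ, |a * (3 * j + 1) - b * (3 * m + 1)| ≤ 1 := by
  obtain ⟨x, y, hxy⟩ := h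
  -- `a + 3 w - b ∈ {-1, 0, 1}`, and Bézout spreads `3 w` over the two factors.
  set w := (b - a + 1) / 3
  refine ⟨x * w, -(y * w), ?_⟩
  have : a * (3 * (x * w) + 1) - b * (3 * -(y * w) + 1) = a + 3 * w - b := by
    linear_combination 3 * w * hxy
  rw [this, abs_le]
  omega

theorem cos_add_le_cos_add_abs (y x : ℝ) : cos (y + x) ≤ cos y + |x| := by
  have := (abs_le.mp (abs_cos_sub_cos_le (y + x) y)).2
  rw [add_sub_cancel_left] at this
  linarith

theorem cos_two_pi_div_three : cos (2 * π / 3) = -1 / 2 := by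
  rw [show 2 * π / 3 = π - π / 3 by ring, cos_pi_sub, cos_pi_div_three]; norm_num

theorem cos_four_pi_div_three : cos (4 * π / 3) = -1 / 2 := by
  rw [show 4 * π / 3 = π / 3 + π by ring, cos_add_pi, cos_pi_div_three]; norm_num

theorem IsCoprime.exists_cos_add_cos_add_cos_le {a b : ℤ} (hb : 0 < b) (h : IsCoprime a b) :
    ∃ θ : ℝ, cos (a * θ) + cos (b * θ) + cos ((a + b) * θ) ≤ -3 / 2 + 4 * π / (3 * b) := by
  obtain ⟨j, m, hjm⟩ := h.exists_abs_mul_sub_mul_le_one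
  set e := a * (3 * j + 1) - b * (3 * m + 1) with he
  have hbR : (0 : ℝ) < b := by exact_mod_cast hb
  set θ : ℝ := 2 * π * (3 * j + 1) / (3 * b)
  set δ : ℝ := 2 * π * e / (3 * b)
  have hbθ : b * θ = 2 * π / 3 + j * (2 * π) := by
    simp only [θ]; field_simp; ring
  have haθ : a * θ = 2 * π / 3 + δ + m * (2 * π) := by
    have heR : (e : ℝ) = a * (3 * j + 1) - b * (3 * m + 1) := by push_cast [he]; ring
    simp only [θ, δ, heR]; field_simp; ring
  have hδ : |δ| ≤ 2 * π / (3 * b) := by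
    have heR : |(e : ℝ)| ≤ 1 := by exact_mod_cast hjm
    rw [abs_div, abs_mul, abs_of_pos two_pi_pos, abs_of_pos (by linarith : (0 : ℝ) < 3 * b)]
    gcongr ?_ / _
    exact mul_le_of_le_one_right two_pi_pos.le heR
  refine ⟨θ, ?_⟩
  have hcosa : cos (a * θ) ≤ -1 / 2 + |δ| := by
    rw [haθ, cos_add_int_mul_two_pi, ← cos_two_pi_div_three]
    exact cos_add_le_cos_add_abs _ δ
  have hcosb : cos (b * θ) = -1 / 2 := by
    rw [hbθ, cos_add_int_mul_two_pi, cos_two_pi_div_three]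
  have hcosc : cos ((a + b) * θ) ≤ -1 / 2 + |δ| := by
    rw [add_mul, haθ, hbθ, show 2 * π / 3 + δ + m * (2 * π) + (2 * π / 3 + j * (2 * π))
      = 4 * π / 3 + δ + ((m + j : ℤ) : ℝ) * (2 * π) by push_cast; ring, cos_add_int_mul_two_pi]
    rw [← cos_four_pi_div_three]
    exact cos_add_le_cos_add_abs _ δ
  have : 4 * π / (3 * b) = 2 * (2 * π / (3 * b)) := by ring
  linarith

theorem stmt_12_general (a b c : ℕ) (hab : a < b) (hgcd : Nat.gcd a b = 1)
    (hc : c = a + b) :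
    ∃ θ : ℝ, cos (a * θ) + cos (b * θ) + cos (c * θ) ≤ -3/2 + 6 / b := by
  have hb : (0 : ℤ) < b := by exact_mod_cast Nat.zero_lt_of_lt hab
  obtain ⟨θ, hθ⟩ := (Nat.isCoprime_iff_coprime.mpr hgcd).exists_cos_add_cos_add_cos_le hb
  refine ⟨θ, ?_⟩
  have hbR : (0 : ℝ) < b := by exact_mod_cast hb
  have : 4 * π / (3 * b) ≤ 6 / b := by
    rw [div_le_div_iff₀ (by positivity) hbR]; nlinarith [pi_lt_four]
  push_cast [hc] at hθ ⊢
  linarith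

theorem stmt_12 (a b c : ℕ) (ha : 0 < a) (hab : a < b) (hgcd : Nat.gcd a b = 1)
    (hb : 33 ≤ b) (hc : c = a + b) :
    ∃ θ : ℝ, cos (a * θ) + cos (b * θ) + cos (c * θ) ≤ -3/2 + 6 / b :=
  stmt_12_general a b c hab hgcd hc
end

section
/- Suppose f(z) = z^{a₁} + ⋯ + z^{aₙ} and g(z) = z^{b₁} + ⋯ + z^{bₘ} are Newman polynomials (distinct nonnegative integer exponents, all coefficients 1) with |f(z)| ≥ K₁ and |g(z)| ≥ K₂ for all complex z with |z| = 1. Then there exists a Newman polynomial h with exactly nm terms such that |h(z)| ≥ K₁K₂ for all |z| = 1. -/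
/-!
If every exponent of `g` is below `k`, the exponents `k * a + b` of `h(z) = f(z ^ k) g(z)` are
pairwise distinct (read `a` and `b` off as quotient and remainder mod `k`), so `h` is a Newman
polynomial with `n * m` terms. On the unit circle `z ^ k` is again unimodular, whence
`|h(z)| = |f(z ^ k)| |g(z)| ≥ K₁ K₂`.
-/

open Finset

section

variable {A B : Finset ℕ} {k : ℕ}

theorem injOn_mul_add_of_forall_lt (hB : ∀ b ∈ B, b < k) :
    Set.InjOn (fun p : ℕ × ℕ => k * p.1 + p.2) (A ×ˢ B : Finset (ℕ × ℕ)) := by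
  rintro ⟨a, b⟩ hab ⟨a', b'⟩ hab' h
  simp only [coe_product, Set.mem_prod, mem_coe] at hab hab' h
  have hk : 0 < k := (Nat.zero_le b).trans_lt (hB b hab.2)
  have hb : b = b' := by
    simpa [Nat.mul_add_mod, Nat.mod_eq_of_lt (hB b hab.2), Nat.mod_eq_of_lt (hB b' hab'.2)]
      using congrArg (· % k) h
  subst hb
  simp [Nat.eq_of_mul_eq_mul_left hk (Nat.add_right_cancel h)]

theorem card_image_mul_add_of_forall_lt (hB : ∀ b ∈ B, b < k) :
    ((A ×ˢ B).image fun p : ℕ × ℕ => k * p.1 + p.2).card = A.card * B.card := by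
  rw [card_image_of_injOn (injOn_mul_add_of_forall_lt hB), card_product]

theorem sum_pow_image_mul_add_of_forall_lt {R : Type*} [CommSemiring R]
    (z : R) (hB : ∀ b ∈ B, b < k) :
    ∑ i ∈ (A ×ˢ B).image (fun p : ℕ × ℕ => k * p.1 + p.2), z ^ i =
      (∑ i ∈ A, (z ^ k) ^ i) * ∑ j ∈ B, z ^ j := by
  rw [sum_image (injOn_mul_add_of_forall_lt hB), sum_mul_sum, sum_product]
  simp only [pow_add, pow_mul]

end

theorem stmt_13_general (n m : ℕ) (A B : Finset ℕ) (hA : A.card = n) (hB : B.card = m)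
    (K₁ K₂ : ℝ) (hK₂ : 0 ≤ K₂)
    (hf : ∀ z : ℂ, ‖z‖ = 1 → K₁ ≤ ‖∑ i ∈ A, z ^ i‖)
    (hg : ∀ z : ℂ, ‖z‖ = 1 → K₂ ≤ ‖∑ i ∈ B, z ^ i‖) :
    ∃ C : Finset ℕ, C.card = n * m ∧
      ∀ z : ℂ, ‖z‖ = 1 → K₁ * K₂ ≤ ‖∑ i ∈ C, z ^ i‖ := by
  have hlt : ∀ b ∈ B, b < B.sup id + 1 := fun b hb => Nat.lt_succ_of_le (le_sup (f := id) hb)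
  refine ⟨_, (card_image_mul_add_of_forall_lt hlt).trans (by rw [hA, hB]), fun z hz => ?_⟩
  have hzk : ‖z ^ (B.sup id + 1)‖ = 1 := by rw [norm_pow, hz, one_pow]
  rw [sum_pow_image_mul_add_of_forall_lt z hlt, norm_mul]
  exact mul_le_mul (hf _ hzk) (hg z hz) hK₂ (norm_nonneg _)

theorem stmt_13 (n m : ℕ) (A B : Finset ℕ) (hA : A.card = n) (hB : B.card = m)
    (K₁ K₂ : ℝ) (hK₁ : 0 ≤ K₁) (hK₂ : 0 ≤ K₂)
    (hf : ∀ z : ℂ, ‖z‖ = 1 → K₁ ≤ ‖∑ i ∈ A, z ^ i‖)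
    (hg : ∀ z : ℂ, ‖z‖ = 1 → K₂ ≤ ‖∑ i ∈ B, z ^ i‖) :
    ∃ C : Finset ℕ, C.card = n * m ∧
      ∀ z : ℂ, ‖z‖ = 1 → K₁ * K₂ ≤ ‖∑ i ∈ C, z ^ i‖ :=
  stmt_13_general n m A B hA hB K₁ K₂ hK₂ hf hg
end

section
/- For each positive integer n there exists a sum f(θ) = cos a₁θ + ⋯ + cos aₙθ with distinct positive integers a₁ < ⋯ < aₙ such that f(θ) ≥ −√(2n) − 1/2 for all real θ. -/
/-!
Write `2n = m(m+1) + 2r` with `r ≤ m`. The `m(m+1)/2` numbers `2^j - 2^i` (`i < j ≤ m`) are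
distinct, and their cosine sum is `(|∑_{k ≤ m} e^{i 2^k θ}|² - (m+1)) / 2 ≥ -(m+1)/2`. The other
`r = 3t + e` frequencies are `t` dilates `{c, 2c, 3c}` (cosine sum `≥ -3/2`) and `e ≤ 2` single
frequencies (`≥ -1`), all at distinct scales `c = 4^k ≥ 4^m`, which keeps every frequency distinct.
As `r ≤ m`, the loss `(m+1)/2 + 3t/2 + e` is at most `√(2n) + 1/2`.
-/

open Real Finset

namespace ChowlaCosine

def CosSumBound (S : Finset ℕ) (c : ℝ) : Prop :=
  ∀ θ : ℝ, -c ≤ ∑ x ∈ S, cos (x * θ)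

namespace CosSumBound

variable {S T : Finset ℕ} {c d : ℝ}

theorem union (hST : Disjoint S T) (hS : CosSumBound S c) (hT : CosSumBound T d) :
    CosSumBound (S ∪ T) (c + d) := fun θ => by
  rw [sum_union hST]
  linarith [hS θ, hT θ]

theorem biUnion {ι : Type*} {s : Finset ι} {A : ι → Finset ℕ} {c : ι → ℝ}
    (hA : (s : Set ι).PairwiseDisjoint A) (h : ∀ i ∈ s, CosSumBound (A i) (c i)) :
    CosSumBound (s.biUnion A) (∑ i ∈ s, c i) := fun θ => by
  rw [sum_biUnion hA, ← sum_neg_distrib]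
  exact sum_le_sum fun i hi => h i hi θ

theorem image_mul {k : ℕ} (hk : 0 < k) (h : CosSumBound S c) :
    CosSumBound (S.image (k * ·)) c := fun θ => by
  rw [sum_image fun x _ y _ hxy => Nat.eq_of_mul_eq_mul_left hk hxy]
  refine (h (k * θ)).trans_eq (sum_congr rfl fun x _ => ?_)
  push_cast
  ring_nf

end CosSumBound

theorem neg_three_halves_le_cos_add_cos_add_cos_add (x y : ℝ) :
    -(3 / 2) ≤ cos x + cos y + cos (x + y) := by
  nlinarith [cos_add x y, sq_nonneg (cos x + cos y + 1), sq_nonneg (sin x - sin y),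
    sin_sq_add_cos_sq x, sin_sq_add_cos_sq y]

theorem cosSumBound_singleton_one : CosSumBound {1} 1 := fun θ => by
  simpa using neg_one_le_cos θ

theorem cosSumBound_one_two_three : CosSumBound {1, 2, 3} (3 / 2) := fun θ => by
  have h := neg_three_halves_le_cos_add_cos_add_cos_add θ (2 * θ)
  rw [show θ + 2 * θ = 3 * θ by ring] at h
  simpa [sum_insert, add_assoc] using h

theorem sq_sum_cos_add_sq_sum_sin (f : ℕ → ℝ) (n : ℕ) :
    (∑ k ∈ range n, cos (f k)) ^ 2 + (∑ k ∈ range n, sin (f k)) ^ 2 =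
      n + 2 * ∑ j ∈ range n, ∑ i ∈ range j, cos (f j - f i) := by
  induction n with
  | zero => simp
  | succ n ih =>
    have hcross : ∑ i ∈ range n, cos (f n - f i) =
        cos (f n) * ∑ i ∈ range n, cos (f i) + sin (f n) * ∑ i ∈ range n, sin (f i) := by
      simp only [cos_sub, mul_sum, sum_add_distrib]
    simp only [sum_range_succ, hcross, Nat.cast_succ]
    linear_combination ih + sin_sq_add_cos_sq (f n)

def powTwoDiffs (m : ℕ) : Finset ℕ :=
  ((range (m + 1)).sigma range).image fun p => 2 ^ p.1 - 2 ^ p.2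

theorem log_two_mul_pow_sub_pow {i j : ℕ} (hij : i < j) :
    Nat.log 2 (2 * (2 ^ j - 2 ^ i)) = j := by
  have hi' : 2 * 2 ^ i ≤ 2 ^ j := by
    simpa [pow_succ, mul_comm] using Nat.pow_le_pow_right (by norm_num : 0 < 2) hij
  refine Nat.log_eq_of_pow_le_of_lt_pow ?_ ?_
  · omega
  · have := Nat.one_le_two_pow (n := i)
    rw [pow_succ]; omega

theorem injOn_pow_sub_pow (m : ℕ) :
    Set.InjOn (fun p : Σ _ : ℕ, ℕ => 2 ^ p.1 - 2 ^ p.2) ((range (m + 1)).sigma range) := by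
  rintro ⟨j, i⟩ hp ⟨j', i'⟩ hq h
  simp only [coe_sigma, Set.mem_sigma_iff, coe_range, Set.mem_Iio] at hp hq h
  obtain rfl : j = j' := by
    rw [← log_two_mul_pow_sub_pow hp.2, ← log_two_mul_pow_sub_pow hq.2, h]
  have : 2 ^ i = 2 ^ i' := by
    have := Nat.pow_lt_pow_right (by norm_num : 1 < 2) hp.2
    have := Nat.pow_lt_pow_right (by norm_num : 1 < 2) hq.2
    omega
  rw [Nat.pow_right_injective le_rfl this]

theorem card_powTwoDiffs (m : ℕ) : (powTwoDiffs m).card * 2 = (m + 1) * m := by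
  rw [powTwoDiffs, card_image_of_injOn (injOn_pow_sub_pow m), card_sigma]
  simpa using sum_range_id_mul_two (m + 1)

theorem powTwoDiffs_subset_Ico (m : ℕ) : powTwoDiffs m ⊆ Ico 1 (2 ^ m) := by
  intro x hx
  simp only [powTwoDiffs, mem_image, mem_sigma, mem_range] at hx
  obtain ⟨⟨j, i⟩, ⟨hj, hi⟩, rfl⟩ := hx
  dsimp only at hj hi ⊢
  have := Nat.pow_lt_pow_right (by norm_num : 1 < 2) hi
  have := Nat.pow_le_pow_right (by norm_num : 0 < 2) (Nat.lt_succ_iff.mp hj)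
  have := Nat.one_le_two_pow (n := i)
  rw [mem_Ico]
  omega

theorem cosSumBound_powTwoDiffs (m : ℕ) : CosSumBound (powTwoDiffs m) ((m + 1) / 2) := fun θ => by
  have hsum : ∑ x ∈ powTwoDiffs m, cos (x * θ) =
      ∑ j ∈ range (m + 1), ∑ i ∈ range j, cos (2 ^ j * θ - 2 ^ i * θ) := by
    rw [powTwoDiffs, sum_image (injOn_pow_sub_pow m), sum_sigma]
    refine sum_congr rfl fun j _ => sum_congr rfl fun i hi => ?_
    have := Nat.pow_le_pow_right (by norm_num : 0 < 2) (mem_range.mp hi).le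
    push_cast [this]
    ring_nf
  have hsq := sq_sum_cos_add_sq_sum_sin (fun k => 2 ^ k * θ) (m + 1)
  push_cast at hsq
  rw [hsum]
  nlinarith [sq_nonneg (∑ k ∈ range (m + 1), cos (2 ^ k * θ)),
    sq_nonneg (∑ k ∈ range (m + 1), sin (2 ^ k * θ))]

theorem sum_range_add_ite_lt {M : Type*} [AddCommMonoid M] (t e : ℕ) (a b : M) :
    ∑ i ∈ range (t + e), (if i < t then a else b) = t • a + e • b := by
  rw [sum_range_add, sum_congr rfl fun i hi => if_pos (mem_range.mp hi)]
  simp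

theorem log_four_pow_mul {k x : ℕ} (hx : x ∈ Icc 1 3) : Nat.log 4 (4 ^ k * x) = k := by
  rw [mem_Icc] at hx
  refine Nat.log_eq_of_pow_le_of_lt_pow (Nat.le_mul_of_pos_right _ hx.1) ?_
  rw [pow_succ]
  exact Nat.mul_lt_mul_of_pos_left (by omega) (by positivity)

theorem pairwiseDisjoint_image_four_pow_mul {A : ℕ → Finset ℕ} (hA : ∀ i, A i ⊆ Icc 1 3)
    (m : ℕ) (s : Set ℕ) : s.PairwiseDisjoint fun i => (A i).image (4 ^ (m + i) * ·) := by
  intro i _ j _ hij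
  rw [Function.onFun, disjoint_left]
  rintro _ hx hy
  obtain ⟨x, hxA, rfl⟩ := mem_image.mp hx
  obtain ⟨y, hyA, hxy⟩ := mem_image.mp hy
  have := log_four_pow_mul (k := m + i) (hA i hxA)
  rw [← hxy, log_four_pow_mul (hA j hyA)] at this
  omega

def tailBase (t i : ℕ) : Finset ℕ := if i < t then {1, 2, 3} else {1}

theorem tailBase_subset_Icc (t i : ℕ) : tailBase t i ⊆ Icc 1 3 := by
  unfold tailBase
  split_ifs <;> decide

theorem cosSumBound_tailBase (t i : ℕ) :
    CosSumBound (tailBase t i) (if i < t then 3 / 2 else 1) := by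
  unfold tailBase
  split_ifs
  exacts [cosSumBound_one_two_three, cosSumBound_singleton_one]

def tailBlocks (m t e : ℕ) : Finset ℕ :=
  (range (t + e)).biUnion fun i => (tailBase t i).image (4 ^ (m + i) * ·)

theorem card_tailBlocks (m t e : ℕ) : (tailBlocks m t e).card = 3 * t + e := by
  rw [tailBlocks, card_biUnion (pairwiseDisjoint_image_four_pow_mul (tailBase_subset_Icc t) m _)]
  simp_rw [card_image_of_injective _ (mul_right_injective₀ (pow_ne_zero _ four_ne_zero)),
    tailBase, apply_ite card]
  simp [sum_range_add_ite_lt, mul_comm]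

theorem four_pow_le_of_mem_tailBlocks {m t e x : ℕ} (hx : x ∈ tailBlocks m t e) : 4 ^ m ≤ x := by
  simp only [tailBlocks, mem_biUnion, mem_image] at hx
  obtain ⟨i, -, y, hy, rfl⟩ := hx
  have hy := mem_Icc.mp (tailBase_subset_Icc t i hy)
  calc 4 ^ m ≤ 4 ^ (m + i) := Nat.pow_le_pow_right (by norm_num) (Nat.le_add_right m i)
    _ ≤ 4 ^ (m + i) * y := Nat.le_mul_of_pos_right _ hy.1

theorem cosSumBound_tailBlocks (m t e : ℕ) : CosSumBound (tailBlocks m t e) (3 / 2 * t + e) := by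
  have h := CosSumBound.biUnion (s := range (t + e))
    (pairwiseDisjoint_image_four_pow_mul (tailBase_subset_Icc t) m _)
    fun i _ => (cosSumBound_tailBase t i).image_mul (pow_pos (by norm_num : 0 < 4) (m + i))
  rwa [sum_range_add_ite_lt, nsmul_eq_mul, nsmul_eq_mul, mul_one, mul_comm (t : ℝ)] at h

def chowlaSet (m t e : ℕ) : Finset ℕ := powTwoDiffs m ∪ tailBlocks m t e

theorem disjoint_powTwoDiffs_tailBlocks (m t e : ℕ) :
    Disjoint (powTwoDiffs m) (tailBlocks m t e) := by
  refine disjoint_left.mpr fun x hx hx' => ?_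
  have h₁ := (mem_Ico.mp (powTwoDiffs_subset_Ico m hx)).2
  have h₂ := four_pow_le_of_mem_tailBlocks hx'
  have h₃ : 2 ^ m ≤ 4 ^ m := Nat.pow_le_pow_left (by norm_num) m
  omega

theorem card_chowlaSet (m t e : ℕ) :
    (chowlaSet m t e).card * 2 = (m + 1) * m + 2 * (3 * t + e) := by
  rw [chowlaSet, card_union_of_disjoint (disjoint_powTwoDiffs_tailBlocks m t e), add_mul,
    card_powTwoDiffs, card_tailBlocks, mul_comm _ 2]

theorem zero_notMem_chowlaSet (m t e : ℕ) : 0 ∉ chowlaSet m t e := by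
  rw [chowlaSet, mem_union, not_or]
  exact ⟨fun h => by simpa using powTwoDiffs_subset_Ico m h,
    fun h => (pow_pos (by norm_num) m).not_ge (four_pow_le_of_mem_tailBlocks h)⟩

theorem cosSumBound_chowlaSet (m t e : ℕ) :
    CosSumBound (chowlaSet m t e) ((m + 1) / 2 + (3 / 2 * t + e)) :=
  (cosSumBound_powTwoDiffs m).union (disjoint_powTwoDiffs_tailBlocks m t e)
    (cosSumBound_tailBlocks m t e)

theorem exists_triangular_add_le (n : ℕ) : ∃ m r, r ≤ m ∧ 2 * n = (m + 1) * m + 2 * r := by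
  induction n with
  | zero => exact ⟨0, 0, le_rfl, rfl⟩
  | succ n ih =>
    obtain ⟨m, r, hrm, hn⟩ := ih
    rcases hrm.lt_or_eq with hrm | rfl
    · exact ⟨m, r + 1, hrm, by omega⟩
    · exact ⟨r + 1, 0, Nat.zero_le _, by rw [mul_add, hn]; ring⟩

theorem bound_le_sqrt_two_mul_add_half {n m t e : ℕ}
    (hn : 2 * n = (m + 1) * m + 2 * (3 * t + e)) (hm : 3 * t + e ≤ m) (he : e ≤ 2) :
    ((m : ℝ) + 1) / 2 + (3 / 2 * t + e) ≤ √(2 * n) + 1 / 2 := by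
  have hn' : (2 * n : ℝ) = (m + 1) * m + 2 * (3 * t + e) := by exact_mod_cast hn
  have hm' : (3 * t + e : ℝ) ≤ m := by exact_mod_cast hm
  have he' : (e : ℝ) ≤ 2 := by exact_mod_cast he
  suffices (m + 3 * t + 2 * e : ℝ) / 2 ≤ √(2 * n) by linarith
  rw [Real.le_sqrt (by positivity) (by positivity), hn']
  nlinarith [e.cast_nonneg (α := ℝ), t.cast_nonneg (α := ℝ)]

theorem exists_strictMono_of_cosSumBound {S : Finset ℕ} {n : ℕ} {c : ℝ} (hcard : S.card = n)
    (h0 : 0 ∉ S) (hS : CosSumBound S c) :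
    ∃ a : Fin n → ℕ, StrictMono a ∧ (∀ i, 0 < a i) ∧ ∀ θ : ℝ, -c ≤ ∑ i, cos (a i * θ) := by
  refine ⟨fun i => S.orderIsoOfFin hcard i, fun i j hij => (S.orderIsoOfFin hcard).strictMono hij,
    fun i => Nat.pos_of_ne_zero fun h => h0 (h ▸ (S.orderIsoOfFin hcard i).2), fun θ => ?_⟩
  have hsum : ∑ i, cos ((S.orderIsoOfFin hcard i : ℕ) * θ) = ∑ x ∈ S, cos (x * θ) :=
    (Fintype.sum_equiv (S.orderIsoOfFin hcard).toEquiv _ _ fun _ => rfl).trans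
      (sum_coe_sort S fun x => cos (x * θ))
  exact hsum ▸ hS θ

end ChowlaCosine

open ChowlaCosine

theorem stmt_14_general (n : ℕ) :
    ∃ a : Fin n → ℕ, StrictMono a ∧ (∀ i, 0 < a i) ∧
      ∀ θ : ℝ, ∑ i, cos (a i * θ) ≥ -Real.sqrt (2 * n) - 1/2 := by
  obtain ⟨m, r, hrm, hn⟩ := exists_triangular_add_le n
  have hr : 3 * (r / 3) + r % 3 = r := Nat.div_add_mod r 3
  have hcard : (chowlaSet m (r / 3) (r % 3)).card = n := by
    have := card_chowlaSet m (r / 3) (r % 3)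
    omega
  obtain ⟨a, ha, hpos, hsum⟩ := exists_strictMono_of_cosSumBound hcard
    (zero_notMem_chowlaSet m _ _) (cosSumBound_chowlaSet m _ _)
  rw [← hr] at hn hrm
  have hbound := bound_le_sqrt_two_mul_add_half hn hrm (by omega : r % 3 ≤ 2)
  exact ⟨a, ha, hpos, fun θ => by linarith [hsum θ]⟩

theorem stmt_14 (n : ℕ) (hn : 0 < n) :
    ∃ a : Fin n → ℕ, StrictMono a ∧ (∀ i, 0 < a i) ∧
      ∀ θ : ℝ, ∑ i, cos (a i * θ) ≥ -Real.sqrt (2 * n) - 1/2 :=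
  stmt_14_general n
end

section
/- Let k, ℓ, m be distinct positive integers with ℓ < m, and let g = gcd(k, m − ℓ). Then there exists a complex number z with |z| = 1 such that |1 + z^k + z^ℓ + z^m| ≤ πg/k. -/
open Real

/-!
Take `z = exp (iπt/k)` with `t` odd, so that `z ^ k = -1` and the sum factors as
`z ^ l * (1 + z ^ (m - l))`. Writing `-1 = exp (iπu)` with `u` odd, `|1 + z ^ (m - l)|` is a chord
of the unit circle, hence at most the arc `π |t (m - l) - u k| / k`. Adjusting Bézout coefficients
by parity gives odd `t`, `u` with `|t (m - l) - u k| ≤ gcd k (m - l)`.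
-/

theorem Int.exists_odd_odd_abs_mul_sub_mul_le_one {a b : ℤ} (h : IsCoprime a b) :
    ∃ t u : ℤ, Odd t ∧ Odd u ∧ |t * a - u * b| ≤ 1 := by
  obtain ⟨x, y, hxy⟩ := h
  -- Both `(x, -y)` and `(x + b, a - y)` solve `t a - u b = 1`; unless `a` and `b` are both odd
  -- (then `(b, a)` works), one of the two pairs is odd in both entries.
  have of_eq (t u : ℤ) (ht : Odd t) (hu : Odd u) (h : t * a - u * b = 1) :
      ∃ t u : ℤ, Odd t ∧ Odd u ∧ |t * a - u * b| ≤ 1 :=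
    ⟨t, u, ht, hu, by rw [h, abs_one]⟩
  rcases Int.even_or_odd a with ha | ha <;> rcases Int.even_or_odd b with hb | hb
  · have : Even (1 : ℤ) := hxy ▸ (ha.mul_left x).add (hb.mul_left y)
    exact absurd this Int.not_even_one
  · have hy : Odd y := (Int.odd_mul.mp (by
      rw [show y * b = 1 - x * a by linarith]; exact odd_one.sub_even (ha.mul_left x))).1
    rcases Int.even_or_odd x with hx | hx
    · exact of_eq (x + b) (a - y) (hx.add_odd hb) (ha.sub_odd hy) (by linear_combination hxy)
    · exact of_eq x (-y) hx hy.neg (by linear_combination hxy)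
  · have hx : Odd x := (Int.odd_mul.mp (by
      rw [show x * a = 1 - y * b by linarith]; exact odd_one.sub_even (hb.mul_left y))).1
    rcases Int.even_or_odd y with hy | hy
    · exact of_eq (x + b) (a - y) (hx.add_even hb) (ha.sub_even hy) (by linear_combination hxy)
    · exact of_eq x (-y) hx hy.neg (by linear_combination hxy)
  · exact ⟨b, a, hb, ha, by simp [mul_comm]⟩

theorem Int.exists_odd_odd_abs_mul_sub_mul_le_gcd (a b : ℤ) :
    ∃ t u : ℤ, Odd t ∧ Odd u ∧ |t * a - u * b| ≤ Int.gcd a b := by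
  rcases Nat.eq_zero_or_pos (Int.gcd a b) with h0 | hpos
  · obtain ⟨rfl, rfl⟩ := Int.gcd_eq_zero_iff.mp h0
    exact ⟨1, 1, odd_one, odd_one, by simp⟩
  obtain ⟨g, a', b', hg, hcop, rfl, rfl⟩ := Int.exists_gcd_one' hpos
  obtain ⟨t, u, ht, hu, hle⟩ :=
    Int.exists_odd_odd_abs_mul_sub_mul_le_one (Int.isCoprime_iff_gcd_eq_one.mpr hcop)
  refine ⟨t, u, ht, hu, ?_⟩
  calc |t * (a' * g) - u * (b' * g)| = |t * a' - u * b'| * g := by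
        rw [show t * (a' * g) - u * (b' * g) = (t * a' - u * b') * g by ring, abs_mul,
          Nat.abs_cast]
    _ ≤ 1 * g := by gcongr
    _ ≤ Int.gcd (a' * g) (b' * g) := by
        rw [one_mul, Int.gcd_mul_right, hcop, one_mul, Int.natAbs_natCast]

theorem Complex.norm_exp_ofReal_mul_I_sub_exp_ofReal_mul_I_le (x y : ℝ) :
    ‖exp (x * I) - exp (y * I)‖ ≤ |x - y| := by
  have : exp (x * I) - exp (y * I) = exp (y * I) * (exp (I * ↑(x - y)) - 1) := by
    rw [mul_sub, ← exp_add]; push_cast; ring_nf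
  rw [this, norm_mul, norm_exp_ofReal_mul_I, one_mul]
  exact Real.norm_exp_I_mul_ofReal_sub_one_le

theorem Complex.exp_int_mul_pi_mul_I_of_odd {n : ℤ} (hn : Odd n) : exp (n * π * I) = -1 := by
  rw [mul_assoc, exp_int_mul, exp_pi_mul_I, hn.neg_one_zpow]

theorem stmt_17_general (k l m : ℕ) (hk : 0 < k) (hlm : l < m) :
    ∃ z : ℂ, ‖z‖ = 1 ∧
      ‖1 + z ^ k + z ^ l + z ^ m‖ ≤ π * (Nat.gcd k (m - l)) / k := by
  obtain ⟨t, u, ht, hu, hle⟩ := Int.exists_odd_odd_abs_mul_sub_mul_le_gcd (m - l : ℕ) k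
  rw [Int.gcd_natCast_natCast, Nat.gcd_comm] at hle
  have hk' : (0 : ℝ) < k := by exact_mod_cast hk
  have hk0 : (k : ℂ) ≠ 0 := by exact_mod_cast hk.ne'
  set z := Complex.exp ((t * π / k : ℝ) * Complex.I)
  have hpow (n : ℕ) : z ^ n = Complex.exp ((n * (t * π / k) : ℝ) * Complex.I) := by
    rw [← Complex.exp_nat_mul]; push_cast; ring_nf
  have hzk : z ^ k = -1 := by
    rw [hpow, ← Complex.exp_int_mul_pi_mul_I_of_odd ht]; congr 1; push_cast; field_simp
  have hfactor : 1 + z ^ k + z ^ l + z ^ m = z ^ l * (z ^ (m - l) + 1) := by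
    rw [hzk, mul_add, ← pow_add, Nat.add_sub_cancel' hlm.le]; ring
  refine ⟨z, Complex.norm_exp_ofReal_mul_I _, ?_⟩
  rw [hfactor, norm_mul, norm_pow, Complex.norm_exp_ofReal_mul_I, one_pow, one_mul, hpow,
    ← sub_neg_eq_add, ← Complex.exp_int_mul_pi_mul_I_of_odd hu]
  calc _ ≤ |(m - l : ℕ) * (t * π / k) - u * π| := by
        exact_mod_cast Complex.norm_exp_ofReal_mul_I_sub_exp_ofReal_mul_I_le _ (u * π)
    _ = π * |(t : ℝ) * (m - l : ℕ) - u * k| / k := by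
        rw [show (m - l : ℕ) * (t * π / k) - u * π = π * (t * (m - l : ℕ) - u * k) / k by
          field_simp, abs_div, abs_mul, abs_of_pos pi_pos, abs_of_pos hk']
    _ ≤ π * (Nat.gcd k (m - l)) / k := by gcongr; exact_mod_cast hle

theorem stmt_17 (k l m : ℕ) (hk : 0 < k) (hl : 0 < l) (hm : 0 < m)
    (hkl : k ≠ l) (hkm : k ≠ m) (hlm : l < m) :
    ∃ z : ℂ, ‖z‖ = 1 ∧
      ‖1 + z ^ k + z ^ l + z ^ m‖ ≤ π * (Nat.gcd k (m - l)) / k :=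
  stmt_17_general k l m hk hlm
end

section
/- Let 0 < a < b < c < d be integers. Then there exists a complex number z with |z| = 1 such that |1 + z^a + z^b + z^c + z^d| ≤ √3. -/
/-!
Let `ω = exp(πi/d)`, so that `z_k = ω^(2k+1)`, `k < d`, run over the `d`-th roots of `-1`. For
`0 < |m| < d` the power sum `∑ k, z_k^m = ω^m ∑ k, (ω^(2m))^k` is a vanishing geometric sum. Expanding
`|z^a + z^b + z^c|^2` as `∑ z^(e - f)` over pairs of exponents in `{a, b, c}`, only the three diagonal
terms survive the averaging over the `z_k`, so the average of `|z^a + z^b + z^c|^2` is `3`. Some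
`z_k` does at most as well as the average, and there `1 + z_k^d = 0`.
-/

open Complex Finset

namespace IsPrimitiveRoot

variable {K : Type*} [Field K] {ω : K} {d : ℕ}

theorem sum_range_pow_odd_pow_eq_zero (hω : IsPrimitiveRoot ω (2 * d)) {m : ℕ} (hm : m ≠ 0)
    (hmd : m < d) : ∑ k ∈ range d, (ω ^ (2 * k + 1)) ^ m = 0 := by
  have hne : ω ^ (2 * m) ≠ 1 := hω.pow_ne_one_of_pos_of_lt (by omega) (by omega)
  have hpow : (ω ^ (2 * m)) ^ d = 1 := by
    rw [← pow_mul, mul_right_comm, pow_mul, hω.pow_eq_one, one_pow]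
  calc ∑ k ∈ range d, (ω ^ (2 * k + 1)) ^ m = ω ^ m * ∑ k ∈ range d, (ω ^ (2 * m)) ^ k := by
        rw [mul_sum]
        exact sum_congr rfl fun k _ => by ring
    _ = 0 := by rw [geom_sum_eq hne, hpow, sub_self, zero_div, mul_zero]

theorem sum_range_zpow_odd_pow_eq_zero (hω : IsPrimitiveRoot ω (2 * d)) {m : ℤ} (hm : m ≠ 0)
    (hmd : m.natAbs < d) : ∑ k ∈ range d, (ω ^ (2 * k + 1)) ^ m = 0 := by
  obtain ⟨n, rfl | rfl⟩ := m.eq_nat_or_neg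
  · simpa using hω.sum_range_pow_odd_pow_eq_zero (m := n) (by omega) (by omega)
  · simpa [inv_pow] using hω.inv.sum_range_pow_odd_pow_eq_zero (m := n) (by omega) (by omega)

theorem sum_range_zpow_odd_pow_sub {e f : ℕ} (hω : IsPrimitiveRoot ω (2 * d)) (he : e < d)
    (hf : f < d) :
    ∑ k ∈ range d, (ω ^ (2 * k + 1)) ^ ((e : ℤ) - f) = if e = f then (d : K) else 0 := by
  split_ifs with hef
  · simp [hef]
  · exact hω.sum_range_zpow_odd_pow_eq_zero (by omega) (by omega)

end IsPrimitiveRoot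

theorem Complex.sq_norm_sum_pow {z : ℂ} (hz : ‖z‖ = 1) (S : Finset ℕ) :
    (‖∑ e ∈ S, z ^ e‖ : ℂ) ^ 2 = ∑ e ∈ S, ∑ f ∈ S, z ^ ((e : ℤ) - f) := by
  have hz0 : z ≠ 0 := norm_ne_zero_iff.mp (by rw [hz]; exact one_ne_zero)
  rw [← mul_conj', map_sum, sum_mul_sum]
  refine sum_congr rfl fun e _ => sum_congr rfl fun f _ => ?_
  rw [map_pow, ← inv_eq_conj hz, zpow_sub₀ hz0, zpow_natCast, zpow_natCast, div_eq_mul_inv,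
    inv_pow]

theorem IsPrimitiveRoot.sum_range_sq_norm_sum_pow {ω : ℂ} {d : ℕ} (hd : d ≠ 0)
    (hω : IsPrimitiveRoot ω (2 * d)) {S : Finset ℕ} (hS : ∀ e ∈ S, e < d) :
    ∑ k ∈ range d, ‖∑ e ∈ S, (ω ^ (2 * k + 1)) ^ e‖ ^ 2 = d * #S := by
  have hnorm : ∀ k, ‖ω ^ (2 * k + 1)‖ = 1 := fun k => by
    rw [norm_pow, hω.norm'_eq_one (by omega), one_pow]
  apply ofReal_injective
  push_cast
  simp_rw [Complex.sq_norm_sum_pow (hnorm _)]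
  rw [sum_comm]
  simp_rw [sum_comm (s := range d)]
  calc ∑ e ∈ S, ∑ f ∈ S, ∑ k ∈ range d, (ω ^ (2 * k + 1)) ^ ((e : ℤ) - f)
      = ∑ e ∈ S, ∑ f ∈ S, if e = f then (d : ℂ) else 0 :=
        sum_congr rfl fun e he => sum_congr rfl fun f hf =>
          hω.sum_range_zpow_odd_pow_sub (hS e he) (hS f hf)
    _ = d * #S := by simp [sum_ite_eq, mul_comm]

theorem exists_pow_eq_neg_one_sq_norm_sum_pow_le {d : ℕ} (hd : d ≠ 0) {S : Finset ℕ}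
    (hS : ∀ e ∈ S, e < d) : ∃ z : ℂ, ‖z‖ = 1 ∧ z ^ d = -1 ∧ ‖∑ e ∈ S, z ^ e‖ ^ 2 ≤ #S := by
  have hω := isPrimitiveRoot_exp (2 * d) (by omega)
  set ω := exp (2 * Real.pi * I / ↑(2 * d))
  obtain ⟨k, -, hk⟩ := exists_le_of_sum_le (nonempty_range_iff.mpr hd)
    (g := fun _ => (#S : ℝ)) (by rw [hω.sum_range_sq_norm_sum_pow hd hS, sum_const, card_range,
      nsmul_eq_mul])
  have hωd : ω ^ d = -1 := by
    have := hω.pow_of_dvd hd (dvd_mul_left d 2)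
    rw [Nat.mul_div_cancel _ (Nat.pos_of_ne_zero hd)] at this
    exact this.eq_neg_one_of_two_right
  refine ⟨ω ^ (2 * k + 1), ?_, ?_, hk⟩
  · rw [norm_pow, hω.norm'_eq_one (by omega), one_pow]
  · rw [← pow_mul, mul_comm, pow_mul, hωd, Odd.neg_one_pow (odd_two_mul_add_one k)]

theorem stmt_18_general (a b c d : ℕ) (hab : a < b) (hbc : b < c) (hcd : c < d) :
    ∃ z : ℂ, ‖z‖ = 1 ∧
      ‖1 + z ^ a + z ^ b + z ^ c + z ^ d‖ ≤ Real.sqrt 3 := by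
  obtain ⟨z, hz, hzd, hle⟩ := exists_pow_eq_neg_one_sq_norm_sum_pow_le (S := {a, b, c})
    (d := d) (by omega) (by simp only [mem_insert, mem_singleton]; omega)
  have hcard : #{a, b, c} = 3 := card_eq_three.mpr ⟨a, b, c, by omega, by omega, by omega, rfl⟩
  have hsum : 1 + z ^ a + z ^ b + z ^ c + z ^ d = ∑ e ∈ {a, b, c}, z ^ e := by
    rw [sum_insert (by simp only [mem_insert, mem_singleton]; omega),
      sum_pair (by omega), hzd]
    ring
  refine ⟨z, hz, ?_⟩
  rw [hsum]
  rw [hcard] at hle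
  exact Real.le_sqrt_of_sq_le (by exact_mod_cast hle)

theorem stmt_18 (a b c d : ℕ) (ha : 0 < a) (hab : a < b) (hbc : b < c) (hcd : c < d) :
    ∃ z : ℂ, ‖z‖ = 1 ∧
      ‖1 + z ^ a + z ^ b + z ^ c + z ^ d‖ ≤ Real.sqrt 3 :=
  stmt_18_general a b c d hab hbc hcd
end

section
/- Let 0 < a < b < c < d be integers with gcd(a, b, c, d) = 1 and c ≥ d − a. Then there exists a complex number z with |z| = 1 such that |1 + z^a + z^b + z^c + z^d| ≤ 1 + π/5. -/
/-!
If `z ^ x = -1` for some `x ∈ {c, d}`, then `1 + z ^ x = 0` and three unimodular terms remain;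
two of them, `z ^ i + z ^ j`, have modulus `‖1 + z ^ (j - i)‖`, so it suffices to make this
at most `π / 5`. Among the `z = exp (π i K / x)` with `K` odd, Bézout lets one bring `w K / x`
(`w = j - i`) within `gcd w x / x` of an odd integer, which gives `‖1 + z ^ w‖ ≤ π gcd w x / x`.
This settles every case with `5 gcd w x ≤ x` for one of `(w, x) = (b - a, d), (c - b, d),
(c - a, d), (b - a, c)`; when all four fail, the ratios `w / x` lie in `{1/4, 1/3, 1/2, 2/3, 3/4}`,
which forces `(a, b, c, d) = (a, 2a, 3a, 4a)`, and then a primitive `5a`-th root of unity is a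
zero of the polynomial.
-/

open Real

theorem Nat.exists_odd_mul_eq_add_add_two_mul (w x : ℕ) :
    ∃ (K M : ℤ) (r : ℕ), Odd K ∧ r ≤ Nat.gcd w x ∧ (w * K : ℤ) = x + r + 2 * x * M := by
  set g := Nat.gcd w x
  have hbezout : (g : ℤ) = w * Nat.gcdA w x + x * Nat.gcdB w x := Nat.gcd_eq_gcd_ab w x
  obtain ⟨m, hm⟩ : (g : ℤ) ∣ x - w :=
    (Int.natCast_dvd_natCast.2 (Nat.gcd_dvd_right w x)).sub
      (Int.natCast_dvd_natCast.2 (Nat.gcd_dvd_left w x))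
  obtain ⟨ε, hε, n, hn⟩ : ∃ ε : ℕ, ε ≤ 1 ∧ ∃ n : ℤ, m + ε = 2 * n := by
    rcases Int.even_or_odd' m with ⟨n, h | h⟩
    exacts [⟨0, zero_le_one, n, by omega⟩, ⟨1, le_rfl, n + 1, by omega⟩]
  refine ⟨1 + 2 * Nat.gcdA w x * n, -(Nat.gcdB w x * n), g * ε, ⟨Nat.gcdA w x * n, by ring⟩,
    by simpa using Nat.mul_le_mul_left g hε, ?_⟩
  push_cast
  linear_combination (-2 * n) * hbezout - hm - g * hn

theorem exists_pow_eq_neg_one_norm_one_add_pow_le (w : ℕ) {x : ℕ} (hx : 0 < x) :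
    ∃ z : ℂ, ‖z‖ = 1 ∧ z ^ x = -1 ∧ ‖1 + z ^ w‖ ≤ π * Nat.gcd w x / x := by
  obtain ⟨K, M, r, hK, hr, hwK⟩ := Nat.exists_odd_mul_eq_add_add_two_mul w x
  set ζ := Complex.exp (π * Complex.I / x)
  have hζ : ‖ζ‖ = 1 := by
    rw [Complex.norm_exp]
    simp
  have hζx : ζ ^ x = -1 := by
    rw [← Complex.exp_nat_mul, mul_div_cancel₀ _ (by exact_mod_cast hx.ne'), Complex.exp_pi_mul_I]
  have hζ0 : ζ ≠ 0 := Complex.exp_ne_zero _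
  refine ⟨ζ ^ K, by rw [norm_zpow, hζ, one_zpow], ?_, ?_⟩
  · rw [← zpow_natCast, ← zpow_mul, mul_comm, zpow_mul, zpow_natCast, hζx, hK.neg_one_zpow]
  have hzw : (ζ ^ K) ^ w = -ζ ^ r := by
    have hζ2x : ζ ^ (2 * x : ℤ) = 1 := by
      rw [mul_comm, zpow_mul, zpow_natCast, hζx]
      norm_num
    rw [← zpow_natCast, ← zpow_mul, mul_comm, hwK, zpow_add₀ hζ0, zpow_add₀ hζ0, zpow_mul, hζ2x,
      one_zpow, zpow_natCast, zpow_natCast, hζx]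
    ring
  have hζr : ζ ^ r = Complex.exp (Complex.I * (π * r / x : ℝ)) := by
    rw [← Complex.exp_nat_mul]
    push_cast
    ring_nf
  calc ‖1 + (ζ ^ K) ^ w‖ = ‖Complex.exp (Complex.I * (π * r / x : ℝ)) - 1‖ := by
        rw [hzw, ← hζr, ← norm_neg]
        ring_nf
    _ ≤ ‖(π * r / x : ℝ)‖ := norm_exp_I_mul_ofReal_sub_one_le
    _ ≤ π * Nat.gcd w x / x := by
        rw [Real.norm_of_nonneg (by positivity)]
        gcongr

theorem norm_pow_add_pow_add_pow_le {z : ℂ} (hz : ‖z‖ = 1) {i j : ℕ} (hij : i ≤ j) (k : ℕ) :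
    ‖z ^ i + z ^ j + z ^ k‖ ≤ ‖1 + z ^ (j - i)‖ + 1 :=
  calc ‖z ^ i + z ^ j + z ^ k‖ ≤ ‖z ^ i * (1 + z ^ (j - i))‖ + ‖z ^ k‖ := by
        rw [mul_add, mul_one, ← pow_add, Nat.add_sub_cancel' hij]
        exact norm_add_le _ _
    _ = ‖1 + z ^ (j - i)‖ + 1 := by simp only [norm_mul, norm_pow, hz, one_pow, one_mul]

theorem exists_pow_eq_neg_one_norm_pow_add_pow_add_pow_le {i j x : ℕ} (hij : i < j) (k : ℕ)
    (hx : 5 * Nat.gcd (j - i) x ≤ x) :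
    ∃ z : ℂ, ‖z‖ = 1 ∧ z ^ x = -1 ∧ ‖z ^ i + z ^ j + z ^ k‖ ≤ 1 + π / 5 := by
  have hg : 0 < Nat.gcd (j - i) x := Nat.gcd_pos_of_pos_left x (by omega)
  have hx0 : (0 : ℝ) < x := by exact_mod_cast (show 0 < x by omega)
  obtain ⟨z, hz, hzx, hzw⟩ := exists_pow_eq_neg_one_norm_one_add_pow_le (j - i) (by omega : 0 < x)
  refine ⟨z, hz, hzx, (norm_pow_add_pow_add_pow_le hz hij.le k).trans ?_⟩
  have hgx : π * Nat.gcd (j - i) x / x ≤ π / 5 := by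
    rw [div_le_div_iff₀ hx0 (by norm_num), mul_assoc]
    gcongr
    exact_mod_cast (by omega : Nat.gcd (j - i) x * 5 ≤ x)
  linarith

theorem Nat.twelve_mul_eq_of_lt_five_mul_gcd {e x : ℕ} (he : 0 < e) (hex : e < x)
    (h : x < 5 * Nat.gcd e x) :
    12 * e = 3 * x ∨ 12 * e = 4 * x ∨ 12 * e = 6 * x ∨ 12 * e = 8 * x ∨ 12 * e = 9 * x := by
  obtain ⟨m, hm⟩ := Nat.gcd_dvd_left e x
  obtain ⟨k, hk⟩ := Nat.gcd_dvd_right e x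
  set g := Nat.gcd e x
  have hk5 : k < 5 := Nat.lt_of_mul_lt_mul_left (a := g) (by rw [← hk]; omega)
  have hmk : m < k := Nat.lt_of_mul_lt_mul_left (a := g) (by rw [← hm, ← hk]; omega)
  interval_cases k <;> interval_cases m <;> omega

theorem Nat.lt_five_mul_gcd_add_cases {p q d : ℕ} (hp : 0 < p) (hq : 0 < q) (hd : p + q < d)
    (hpd : d < 5 * Nat.gcd p d) (hqd : d < 5 * Nat.gcd q d) (hpqd : d < 5 * Nat.gcd (p + q) d) :
    (d = 4 * p ∧ q = p) ∨ (d = 4 * p ∧ q = 2 * p) ∨ (d = 4 * q ∧ p = 2 * q) ∨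
      (d = 3 * p ∧ q = p) := by
  rcases Nat.twelve_mul_eq_of_lt_five_mul_gcd hp (by omega) hpd with h | h | h | h | h <;>
  rcases Nat.twelve_mul_eq_of_lt_five_mul_gcd hq (by omega) hqd with h | h | h | h | h <;>
  rcases Nat.twelve_mul_eq_of_lt_five_mul_gcd (by omega) hd hpqd with h | h | h | h | h <;>
  omega

theorem Nat.eq_mul_of_lt_five_mul_gcd {a b c d : ℕ} (ha : 0 < a) (hab : a < b) (hbc : b < c)
    (hcd : c < d) (hd₁ : d < 5 * Nat.gcd (b - a) d) (hd₂ : d < 5 * Nat.gcd (c - b) d)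
    (hd₃ : d < 5 * Nat.gcd (c - a) d) (hc : c < 5 * Nat.gcd (b - a) c) :
    b = 2 * a ∧ c = 3 * a ∧ d = 4 * a := by
  have hcases := Nat.lt_five_mul_gcd_add_cases (p := b - a) (q := c - b) (by omega) (by omega)
    (by omega) hd₁ hd₂ (by rwa [show b - a + (c - b) = c - a by omega])
  rcases Nat.twelve_mul_eq_of_lt_five_mul_gcd (by omega) (by omega) hc with h | h | h | h | h <;>
  omega

theorem exists_norm_eq_one_one_add_pow_add_pow_add_pow_add_pow_eq_zero {a : ℕ} (ha : 0 < a) :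
    ∃ z : ℂ, ‖z‖ = 1 ∧ 1 + z ^ a + z ^ (2 * a) + z ^ (3 * a) + z ^ (4 * a) = 0 := by
  have hζ := Complex.isPrimitiveRoot_exp (5 * a) (by omega)
  refine ⟨_, hζ.norm'_eq_one (by omega), ?_⟩
  have h := (hζ.pow (by omega) (mul_comm 5 a)).geom_sum_eq_zero (by norm_num)
  simp only [Finset.sum_range_succ, Finset.sum_range_zero, ← pow_mul] at h
  linear_combination h

theorem stmt_19_general (a b c d : ℕ) (ha : 0 < a) (hab : a < b) (hbc : b < c) (hcd : c < d) :
    ∃ z : ℂ, ‖z‖ = 1 ∧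
      ‖1 + z ^ a + z ^ b + z ^ c + z ^ d‖ ≤ 1 + π / 5 := by
  by_cases hd₁ : 5 * Nat.gcd (b - a) d ≤ d
  · obtain ⟨z, hz, hzd, h⟩ := exists_pow_eq_neg_one_norm_pow_add_pow_add_pow_le hab c hd₁
    exact ⟨z, hz, by convert h using 2; linear_combination hzd⟩
  by_cases hd₂ : 5 * Nat.gcd (c - b) d ≤ d
  · obtain ⟨z, hz, hzd, h⟩ := exists_pow_eq_neg_one_norm_pow_add_pow_add_pow_le hbc a hd₂
    exact ⟨z, hz, by convert h using 2; linear_combination hzd⟩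
  by_cases hd₃ : 5 * Nat.gcd (c - a) d ≤ d
  · obtain ⟨z, hz, hzd, h⟩ :=
      exists_pow_eq_neg_one_norm_pow_add_pow_add_pow_le (hab.trans hbc) b hd₃
    exact ⟨z, hz, by convert h using 2; linear_combination hzd⟩
  by_cases hc : 5 * Nat.gcd (b - a) c ≤ c
  · obtain ⟨z, hz, hzc, h⟩ := exists_pow_eq_neg_one_norm_pow_add_pow_add_pow_le hab d hc
    exact ⟨z, hz, by convert h using 2; linear_combination hzc⟩
  rw [not_le] at hd₁ hd₂ hd₃ hc
  obtain ⟨rfl, rfl, rfl⟩ := Nat.eq_mul_of_lt_five_mul_gcd ha hab hbc hcd hd₁ hd₂ hd₃ hc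
  obtain ⟨z, hz, h⟩ := exists_norm_eq_one_one_add_pow_add_pow_add_pow_add_pow_eq_zero ha
  exact ⟨z, hz, by rw [h, norm_zero]; positivity⟩

theorem stmt_19 (a b c d : ℕ) (ha : 0 < a) (hab : a < b) (hbc : b < c) (hcd : c < d)
    (hgcd : Nat.gcd (Nat.gcd (Nat.gcd a b) c) d = 1) (hca : d - a ≤ c) :
    ∃ z : ℂ, ‖z‖ = 1 ∧
      ‖1 + z ^ a + z ^ b + z ^ c + z ^ d‖ ≤ 1 + π / 5 :=
  stmt_19_general a b c d ha hab hbc hcd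
end
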